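/- arXiv:1906.12246 — 4 statements merged into one kernel-verified Lean document; each statement's English description precedes it below -/
import Mathlib

section
/- For every nonzero object A ∈ A, the class of A in the Grothendieck group K(A) and the class [A] of A in the Grothendieck group K(R) are both nonzero. -/
open CategoryTheory CategoryTheory.Limits Opposite

noncomputable section

universe u

variable (k : Type) [Field k] [Fintype k]
variable (R : Type u) [SmallCategory R] [Abelian R] [Linear k R] [EnoughProjectives R]

/-- The objects `A` of `R` such that `Hom(M, A)` is a finite set for every `M`. -/
def IsFinHom (A : R) : Prop := ∀ M : R, Finite (M ⟶ A)

/-- The Euler form `⟨M,A⟩ = dim Hom(M,A) - dim Ext¹(M,A)`. -/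
def euler (M A : R) : ℤ :=
  (Module.finrank k (M ⟶ A) : ℤ) -
    (Module.finrank k (((_root_.Ext k R 1).obj (op M)).obj A) : ℤ)

/-- The set of relations defining the Grothendieck group of `R`. -/
def sesSet : Set (FreeAbelianGroup R) :=
  {x | ∃ S : ShortComplex R, S.ShortExact ∧
    x = FreeAbelianGroup.of S.X₂ - FreeAbelianGroup.of S.X₁ - FreeAbelianGroup.of S.X₃}

/-- The Grothendieck group `K(R)`. -/
abbrev K0 := FreeAbelianGroup R ⧸ AddSubgroup.closure (sesSet R)

/-- The class of an object in `K(R)`. -/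
def K0.cls (X : R) : K0 R := QuotientAddGroup.mk (FreeAbelianGroup.of X)

/-- The set of relations defining the Grothendieck group of the subcategory `A`. -/
def sesSetA : Set (FreeAbelianGroup {A : R // IsFinHom R A}) :=
  {x | ∃ (S : ShortComplex R) (h1 : IsFinHom R S.X₁) (h2 : IsFinHom R S.X₂)
      (h3 : IsFinHom R S.X₃), S.ShortExact ∧
    x = FreeAbelianGroup.of ⟨S.X₂, h2⟩ - FreeAbelianGroup.of ⟨S.X₁, h1⟩ -
      FreeAbelianGroup.of ⟨S.X₃, h3⟩}

/-- The Grothendieck group `K(A)`. -/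
abbrev KA := FreeAbelianGroup {A : R // IsFinHom R A} ⧸ AddSubgroup.closure (sesSetA R)

/-- The class of an object of `A` in `K(A)`. -/
def KA.cls (A : {A : R // IsFinHom R A}) : KA R := QuotientAddGroup.mk (FreeAbelianGroup.of A)

/-- `R` is hereditary, i.e. of global dimension at most 1. -/
def Hereditary : Prop :=
  ∀ X Y : R, Subsingleton (((_root_.Ext k R 2).obj (op X)).obj Y)

/-- Condition (c): cancellation for projectives. -/
def CondC : Prop :=
  ∀ P Q M : R, Projective P → Projective Q → Projective M →
    Nonempty ((M ⊞ P) ≅ (M ⊞ Q)) → Nonempty (P ≅ Q)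

/-- Condition (d): every element of `K(R)` is a `ℚ`-linear combination of classes of
objects of `A`. -/
def CondD : Prop :=
  ∀ x : K0 R, ∃ n : ℕ, n ≠ 0 ∧ (n : ℤ) • x ∈
    AddSubgroup.closure (Set.range fun A : {A : R // IsFinHom R A} => K0.cls R A.1)

/-- Condition (e). -/
def CondE : Prop :=
  ∀ A B : R, IsFinHom R A → IsFinHom R B → K0.cls R A = K0.cls R B →
    ∀ P : R, Projective P → Nat.card (P ⟶ A) = Nat.card (P ⟶ B)

open ZeroObject

section

omit [EnoughProjectives R]

omit [Abelian R] in
lemma isFinHom_of_isZero {X : R} (hX : IsZero X) : IsFinHom R X := fun M =>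
  have : Subsingleton (M ⟶ X) := ⟨hX.eq_of_tgt⟩
  inferInstance

lemma K0.cls_eq_zero_of_isZero {X : R} (hX : IsZero X) : K0.cls R X = 0 := by
  let S : ShortComplex R := ShortComplex.mk (𝟙 X) (𝟙 X) (hX.eq_of_src _ _)
  have hS : S.ShortExact :=
    { exact := S.exact_of_isZero_X₂ hX
      mono_f := ⟨fun _ _ _ => hX.eq_of_tgt _ _⟩
      epi_g := ⟨fun _ _ _ => hX.eq_of_src _ _⟩ }
  have hrel : -FreeAbelianGroup.of X ∈ AddSubgroup.closure (sesSet R) :=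
    AddSubgroup.subset_closure ⟨S, hS, by abel⟩
  rw [K0.cls, QuotientAddGroup.eq_zero_iff]
  simpa using neg_mem hrel

def KA.toK0 : KA R →+ K0 R :=
  QuotientAddGroup.map _ _ (FreeAbelianGroup.map Subtype.val) <| by
    refine (AddSubgroup.closure_le _).2 ?_
    rintro x ⟨S, h1, h2, h3, hS, rfl⟩
    simp only [SetLike.mem_coe, AddSubgroup.mem_comap, map_sub, FreeAbelianGroup.map_of_apply]
    exact AddSubgroup.subset_closure ⟨S, hS, rfl⟩

lemma KA.toK0_cls (A : {A : R // IsFinHom R A}) : KA.toK0 R (KA.cls R A) = K0.cls R A.1 := by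
  rw [KA.cls, KA.toK0, K0.cls, QuotientAddGroup.map_mk, FreeAbelianGroup.map_of_apply]

end

lemma isZero_of_subsingleton_hom_projective_over {A : R}
    (h : Subsingleton (Projective.over A ⟶ A)) : IsZero A :=
  IsZero.of_epi_eq_zero (Projective.π A) (Subsingleton.elim _ _)

/-- Condition (e) compares `Hom(P, A)` with `Hom(P, 0)` for a projective `P` covering `A`. -/
lemma K0.cls_ne_zero (he : CondE R) {A : R} (hA : IsFinHom R A) (hne : ¬ IsZero A) :
    K0.cls R A ≠ 0 := by
  intro hA0
  have hcard : Nat.card (Projective.over A ⟶ A) = Nat.card (Projective.over A ⟶ (0 : R)) :=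
    he A 0 hA (isFinHom_of_isZero R (isZero_zero R))
      (by rw [hA0, K0.cls_eq_zero_of_isZero R (isZero_zero R)]) (Projective.over A) inferInstance
  have : Unique (Projective.over A ⟶ (0 : R)) :=
    ⟨⟨0⟩, fun _ => (isZero_zero R).eq_of_tgt _ _⟩
  exact hne (isZero_of_subsingleton_hom_projective_over R
    (Nat.card_eq_one_iff_unique.1 (hcard.trans Nat.card_unique)).1)

theorem stmt2 (he : CondE R)
    (A : R) (hA : IsFinHom R A) (hne : ¬ IsZero A) :
    KA.cls R ⟨A, hA⟩ ≠ 0 ∧ K0.cls R A ≠ 0 := by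
  have hK0 : K0.cls R A ≠ 0 := K0.cls_ne_zero R he hA hne
  refine ⟨fun hKA => hK0 ?_, hK0⟩
  simpa [hKA] using (KA.toK0_cls R ⟨A, hA⟩).symm

end
end

section
/- Every Z/2-graded complex of projectives M• ∈ C(P) decomposes as a direct sum M• ≅ C_f ⊕ C_g^† for some injective morphisms f and g in P, this decomposition is unique up to isomorphism, and moreover H₀(M•) ≅ coker(f) and H₁(M•) ≅ coker(g). -/
set_option linter.unusedSectionVars false

open CategoryTheory CategoryTheory.Limits Opposite

noncomputable section

universe u

variable (k : Type) [Field k] [Fintype k]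
variable (R : Type u) [SmallCategory R] [Abelian R] [Linear k R] [EnoughProjectives R]

structure Z2Cx where
  X0 : R
  X1 : R
  d0 : X0 ⟶ X1
  d1 : X1 ⟶ X0
  d01 : d0 ≫ d1 = 0
  d10 : d1 ≫ d0 = 0

namespace Z2Cx

variable {R}

/-- Morphisms of `ℤ/2`-graded complexes. -/
@[ext] structure Hom (M N : Z2Cx R) where
  f0 : M.X0 ⟶ N.X0
  f1 : M.X1 ⟶ N.X1
  comm0 : M.d0 ≫ f1 = f0 ≫ N.d0
  comm1 : M.d1 ≫ f0 = f1 ≫ N.d1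

instance : CategoryStruct (Z2Cx R) where
  Hom := Hom
  id M := ⟨𝟙 _, 𝟙 _, by simp, by simp⟩
  comp {M N P} f g := ⟨f.f0 ≫ g.f0, f.f1 ≫ g.f1, by
      rw [← Category.assoc, f.comm0, Category.assoc, g.comm0, Category.assoc], by
      rw [← Category.assoc, f.comm1, Category.assoc, g.comm1, Category.assoc]⟩

@[simp] lemma id_f0 (M : Z2Cx R) : (𝟙 M : Hom M M).f0 = 𝟙 M.X0 := rfl
@[simp] lemma id_f1 (M : Z2Cx R) : (𝟙 M : Hom M M).f1 = 𝟙 M.X1 := rfl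
@[simp] lemma comp_f0 {M N P : Z2Cx R} (f : M ⟶ N) (g : N ⟶ P) :
    (f ≫ g).f0 = Hom.f0 f ≫ Hom.f0 g := rfl
@[simp] lemma comp_f1 {M N P : Z2Cx R} (f : M ⟶ N) (g : N ⟶ P) :
    (f ≫ g).f1 = Hom.f1 f ≫ Hom.f1 g := rfl

instance : Category (Z2Cx R) where
  id_comp f := by apply Hom.ext <;> simp
  comp_id f := by apply Hom.ext <;> simp
  assoc f g h := by apply Hom.ext <;> simp

variable (R)

/-- The two-term complex `C_f` associated to a morphism `f`, concentrated so that
`X1 = P`, `X0 = Q`, `d1 = f`, `d0 = 0`. -/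
def Cf {P Q : R} (f : P ⟶ Q) : Z2Cx R := ⟨Q, P, 0, f, by simp, by simp⟩

/-- The shift involution `†`: it interchanges the gradings and negates the differentials. -/
def dagger (M : Z2Cx R) : Z2Cx R :=
  ⟨M.X1, M.X0, -M.d1, -M.d0, by simp [M.d10], by simp [M.d01]⟩

/-- The acyclic complex `K_P` with `d1 = 𝟙 P` and `d0 = 0`. -/
def KP (P : R) : Z2Cx R := ⟨P, P, 0, 𝟙 P, by simp, by simp⟩

/-- Direct sum of `ℤ/2`-graded complexes. -/
def dsum (M N : Z2Cx R) : Z2Cx R where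
  X0 := M.X0 ⊞ N.X0
  X1 := M.X1 ⊞ N.X1
  d0 := biprod.map M.d0 N.d0
  d1 := biprod.map M.d1 N.d1
  d01 := by ext <;> simp [M.d01, N.d01]
  d10 := by ext <;> simp [M.d10, N.d10]

/-- Degree `0` homology of a `ℤ/2`-graded complex. -/
def H0 (M : Z2Cx R) : R := (ShortComplex.mk M.d1 M.d0 M.d10).homology

/-- Degree `1` homology of a `ℤ/2`-graded complex. -/
def H1 (M : Z2Cx R) : R := (ShortComplex.mk M.d0 M.d1 M.d01).homology

/-- The homology complex `H•(M•)`, with zero differentials. -/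
def Hcx (M : Z2Cx R) : Z2Cx R := ⟨H0 R M, H1 R M, 0, 0, by simp, by simp⟩

/-- A complex is acyclic if its homology vanishes. -/
def Acyclic (M : Z2Cx R) : Prop := IsZero (H0 R M) ∧ IsZero (H1 R M)

end Z2Cx
open Z2Cx

section Aux

variable {k R}

/-! ### Step A: in a hereditary category, subobjects of projectives are projective -/

/-- A custom projective resolution of the cokernel of a mono `i : Z ⟶ P` with `P` projective. -/
def hrComplex {Z P : R} (i : Z ⟶ P) : ChainComplex R ℕ :=
  ChainComplex.mk P (Projective.over Z) (Projective.syzygies (Projective.π Z ≫ i))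
    (Projective.π Z ≫ i) (Projective.d (Projective.π Z ≫ i))
      (show Projective.d (Projective.π Z ≫ i) ≫ (Projective.π Z ≫ i) = 0 from
        ((Category.assoc _ _ _).trans (congrArg (fun x => Projective.π _ ≫ x)
        (kernel.condition _))).trans comp_zero)
    (fun S => ⟨Projective.syzygies S.f, Projective.d S.f,
      show Projective.d S.f ≫ S.f = 0 from
        ((Category.assoc _ _ _).trans (congrArg (fun x => Projective.π _ ≫ x)
        (kernel.condition _))).trans comp_zero⟩)

lemma hrComplex_d10 {Z P : R} (i : Z ⟶ P) :
    (hrComplex i).d 1 0 = Projective.π Z ≫ i := by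
  exact ChainComplex.mk_d_1_0 ..

lemma hrComplex_d21 {Z P : R} (i : Z ⟶ P) :
    (hrComplex i).d 2 1 = Projective.d (Projective.π Z ≫ i) := by
  exact ChainComplex.mk_d_2_1 ..

lemma hrComplex_exactAt_succ {Z P : R} (i : Z ⟶ P) (n : ℕ) :
    (hrComplex i).ExactAt (n + 1) := by
  rw [HomologicalComplex.exactAt_iff' _ (n + 1 + 1) (n + 1) n (by simp) (by simp)]
  match n with
  | 0 =>
    refine (ShortComplex.exact_iff_of_iso ?_).1 (CategoryTheory.exact_d_f (Projective.π Z ≫ i))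
    refine ShortComplex.isoMk (Iso.refl _) (Iso.refl _) (Iso.refl _) ?_ ?_
    · exact (Category.id_comp _).trans ((hrComplex_d21 i).trans (Category.comp_id _).symm)
    · exact (Category.id_comp _).trans ((hrComplex_d10 i).trans (Category.comp_id _).symm)
  | n + 1 =>
    dsimp [hrComplex, HomologicalComplex.sc', HomologicalComplex.shortComplexFunctor',
        ChainComplex.mk, ChainComplex.of.d]
    refine (ShortComplex.exact_iff_of_iso ?_).1 (CategoryTheory.exact_d_f
      (ChainComplex.mkAux P (Projective.over Z) (Projective.syzygies (Projective.π Z ≫ i))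
      (Projective.π Z ≫ i) (Projective.d (Projective.π Z ≫ i))
      (show Projective.d (Projective.π Z ≫ i) ≫ (Projective.π Z ≫ i) = 0 from
        ((Category.assoc _ _ _).trans (congrArg (fun x => Projective.π _ ≫ x)
        (kernel.condition _))).trans comp_zero)
      (fun S => ⟨Projective.syzygies S.f, Projective.d S.f,
      show Projective.d S.f ≫ S.f = 0 from
        ((Category.assoc _ _ _).trans (congrArg (fun x => Projective.π _ ≫ x)
        (kernel.condition _))).trans comp_zero⟩) n).f)
    refine ShortComplex.isoMk (Iso.refl _) (Iso.refl _) (Iso.refl _) ?_ ?_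
    · exact (Category.id_comp _).trans ((if_pos rfl).trans
        ((Category.id_comp _).trans (Category.comp_id _).symm))
    · exact (Category.id_comp _).trans ((if_pos rfl).trans
        ((Category.id_comp _).trans (Category.comp_id _).symm))

instance hrComplex_projective {Z P : R} (i : Z ⟶ P) [Projective P] (n : ℕ) :
    Projective ((hrComplex i).X n) := by
  obtain (_ | _ | _ | n) := n
  · exact ‹Projective P›
  · apply Projective.projective_over
  · apply Projective.projective_over
  · apply Projective.projective_over

/-- The resolution of `cokernel i`. -/
def hrRes {Z P : R} (i : Z ⟶ P) [Mono i] [Projective P] :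
    ProjectiveResolution (cokernel i) where
  complex := hrComplex i
  projective := hrComplex_projective i
  π := (ChainComplex.toSingle₀Equiv _ _).symm ⟨cokernel.π i, by
        rw [hrComplex_d10]
        exact ((Category.assoc _ _ _).trans (congrArg (fun x => Projective.π Z ≫ x)
          (cokernel.condition i))).trans comp_zero⟩
  quasiIso := ⟨fun n => by
    cases n with
    | zero =>
      rw [ChainComplex.quasiIsoAt₀_iff, ShortComplex.quasiIso_iff_of_zeros']
      · have hex : (ShortComplex.mk (Projective.π Z ≫ i) (cokernel.π i)
            (by rw [Category.assoc, cokernel.condition, comp_zero])).Exact :=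
          ShortComplex.exact_of_g_is_cokernel _
            (IsColimit.ofIsoColimit (isCokernelEpiComp (cokernelIsCokernel i) (Projective.π Z) rfl)
              (Cofork.ext (Iso.refl _) (by simp)))
        refine (ShortComplex.exact_and_epi_g_iff_of_iso ?_).2
          ⟨hex, by dsimp; infer_instance⟩
        exact ShortComplex.isoMk (Iso.refl _) (Iso.refl _) (Iso.refl _)
            (by simp [hrComplex_d10]; exact (Category.id_comp _).trans (Category.comp_id _).symm)
            (by simp [ChainComplex.toSingle₀Equiv]
                exact (Category.id_comp _).trans (
                  ((HomologicalComplex.mkHomToSingle_f (K := hrComplex i) (j := 0) (cokernel.π i) _).trans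
                    (Category.comp_id _)).symm.trans (Category.comp_id _).symm))
      all_goals rfl
    | succ n =>
      rw [quasiIsoAt_iff_exactAt']
      · apply hrComplex_exactAt_succ
      · apply ChainComplex.exactAt_succ_single_obj⟩

theorem projective_of_mono (hH : Hereditary k R) {Z P : R} (i : Z ⟶ P) [Mono i] [Projective P] :
    Projective Z := by
  have d10_def : (hrComplex i).d 1 0 = Projective.π Z ≫ i := hrComplex_d10 i
  set d10 : (Projective.over Z : R) ⟶ P := Projective.π Z ≫ i with hd10
  set K : R := kernel d10 with hK
  have hsub : Subsingleton (((_root_.Ext k R 2).obj (op (cokernel i))).obj K) :=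
    hH (cokernel i) K
  have hzero : IsZero (((hrRes i).complex.linearYonedaObj k K).homology 2) := by
    have : IsZero (((_root_.Ext k R 2).obj (op (cokernel i))).obj K) :=
      @ModuleCat.isZero_of_subsingleton _ _ _ hsub
    exact IsZero.of_iso this ((hrRes i).isoExt 2 K).symm
  have hex : ((((hrRes i)).complex.linearYonedaObj k K).sc' 1 2 3).Exact := by
    rw [← HomologicalComplex.exactAt_iff' _ 1 2 3 (by simp) (by simp),
        HomologicalComplex.exactAt_iff_isZero_homology]
    exact hzero
  rw [ShortComplex.moduleCat_exact_iff] at hex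
  have hcx : (hrRes i).complex = hrComplex i := rfl
  have hq0 : (hrComplex i).d 3 2 ≫ (Projective.π K : (Projective.syzygies d10 : R) ⟶ K) = 0 := by
    have h1 : (hrComplex i).d 3 2 ≫ (hrComplex i).d 2 1 = 0 := (hrComplex i).d_comp_d 3 2 1
    rw [hrComplex_d21 i] at h1
    have h2 : ((hrComplex i).d 3 2 ≫ Projective.π K) ≫ kernel.ι d10 = 0 := by
      simp [Projective.d, Category.assoc] at h1
      exact (Category.assoc _ _ _).trans h1
    exact (cancel_mono (kernel.ι d10)).1 (by rw [h2, zero_comp])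
  obtain ⟨ψ, hψ⟩ := hex (Projective.π K) (by
    show (((hrRes i)).complex.linearYonedaObj k K).d 2 3 (Projective.π K) = 0
    simp only [ChainComplex.linearYonedaObj_d, hcx]
    exact hq0)
  have hψ' : (hrComplex i).d 2 1 ≫ ψ = Projective.π K := by
    exact hψ
  have hretr : kernel.ι d10 ≫ ψ = 𝟙 K := by
    rw [← cancel_epi (Projective.π K)]
    rw [hrComplex_d21 i] at hψ'
    exact (Category.assoc _ _ _).symm.trans (hψ'.trans (Category.comp_id _).symm)
  have wS : kernel.ι d10 ≫ Projective.π Z = 0 := by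
    rw [← cancel_mono i, Category.assoc, ← hd10, kernel.condition, zero_comp]
  have hS0 : (ShortComplex.mk (kernel.ι d10) (Projective.π Z) wS).Exact := by
    refine ShortComplex.exact_of_f_is_kernel _ ?_
    refine KernelFork.IsLimit.ofι _ _
      (fun a ha => kernel.lift d10 a (by rw [hd10, ← Category.assoc, ha, zero_comp]))
      (fun a ha => kernel.lift_ι _ _ _) ?_
    intro W a ha m hm
    rw [← cancel_mono (kernel.ι d10), hm, kernel.lift_ι]
  have split := ShortComplex.Splitting.ofExactOfRetraction _ hS0 ψ hretr
    (by dsimp; infer_instance)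
  constructor
  intro E X f e he
  exact ⟨split.s ≫ Projective.factorThru (Projective.π Z ≫ f) e,
    by rw [Category.assoc, Projective.factorThru_comp, ← Category.assoc]
       exact (congrArg (· ≫ f) split.s_g).trans (Category.id_comp f)⟩

/-! ### Biproduct component lemmas -/

lemma fstinl {X Y : R} :
    (biprod.fst ≫ biprod.inl : X ⊞ Y ⟶ X ⊞ Y) = 𝟙 _ - biprod.snd ≫ biprod.inr :=
  eq_sub_of_add_eq biprod.total

lemma sndinr {X Y : R} :
    (biprod.snd ≫ biprod.inr : X ⊞ Y ⟶ X ⊞ Y) = 𝟙 _ - biprod.fst ≫ biprod.inl :=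
  eq_sub_of_add_eq (by rw [add_comm]; exact biprod.total)

section Diag

variable {A B A₂ B₂ : R} (φ : A ⊞ B ⟶ A₂ ⊞ B₂) (ψ : A₂ ⊞ B₂ ⟶ A ⊞ B)

lemma diag_fst_left (hφψ : φ ≫ ψ = 𝟙 _) (hc : biprod.inl ≫ φ ≫ biprod.snd = 0) :
    (biprod.inl ≫ φ ≫ biprod.fst) ≫ (biprod.inl ≫ ψ ≫ biprod.fst) = 𝟙 A := by
  have : (biprod.inl ≫ φ ≫ biprod.fst) ≫ (biprod.inl ≫ ψ ≫ biprod.fst) =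
      biprod.inl ≫ φ ≫ (biprod.fst ≫ biprod.inl) ≫ ψ ≫ biprod.fst := by simp
  rw [this, fstinl]
  simp [Preadditive.sub_comp, Preadditive.comp_sub, reassoc_of% hφψ, reassoc_of% hc]

lemma diag_fst_right (hφψ : φ ≫ ψ = 𝟙 _) (hc : biprod.inr ≫ ψ ≫ biprod.fst = 0) :
    (biprod.inl ≫ φ ≫ biprod.fst) ≫ (biprod.inl ≫ ψ ≫ biprod.fst) = 𝟙 A := by
  have : (biprod.inl ≫ φ ≫ biprod.fst) ≫ (biprod.inl ≫ ψ ≫ biprod.fst) =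
      biprod.inl ≫ φ ≫ (biprod.fst ≫ biprod.inl) ≫ ψ ≫ biprod.fst := by simp
  rw [this, fstinl]
  simp [Preadditive.sub_comp, Preadditive.comp_sub, reassoc_of% hφψ, hc]

lemma diag_snd_left (hφψ : φ ≫ ψ = 𝟙 _) (hc : biprod.inr ≫ φ ≫ biprod.fst = 0) :
    (biprod.inr ≫ φ ≫ biprod.snd) ≫ (biprod.inr ≫ ψ ≫ biprod.snd) = 𝟙 B := by
  have : (biprod.inr ≫ φ ≫ biprod.snd) ≫ (biprod.inr ≫ ψ ≫ biprod.snd) =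
      biprod.inr ≫ φ ≫ (biprod.snd ≫ biprod.inr) ≫ ψ ≫ biprod.snd := by simp
  rw [this, sndinr]
  simp [Preadditive.sub_comp, Preadditive.comp_sub, reassoc_of% hφψ, reassoc_of% hc]

lemma diag_snd_right (hφψ : φ ≫ ψ = 𝟙 _) (hc : biprod.inl ≫ ψ ≫ biprod.snd = 0) :
    (biprod.inr ≫ φ ≫ biprod.snd) ≫ (biprod.inr ≫ ψ ≫ biprod.snd) = 𝟙 B := by
  have : (biprod.inr ≫ φ ≫ biprod.snd) ≫ (biprod.inr ≫ ψ ≫ biprod.snd) =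
      biprod.inr ≫ φ ≫ (biprod.snd ≫ biprod.inr) ≫ ψ ≫ biprod.snd := by simp
  rw [this, sndinr]
  simp [Preadditive.sub_comp, Preadditive.comp_sub, reassoc_of% hφψ, hc]

end Diag

/-! ### Lemmas about `Z2Cx` -/

namespace Z2Cx

@[simp] lemma dsum_d0 (A B : Z2Cx R) : (dsum R A B).d0 = biprod.map A.d0 B.d0 := rfl
@[simp] lemma dsum_d1 (A B : Z2Cx R) : (dsum R A B).d1 = biprod.map A.d1 B.d1 := rfl
@[simp] lemma Cf_d0 {P Q : R} (f : P ⟶ Q) : (Cf R f).d0 = 0 := rfl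
@[simp] lemma Cf_d1 {P Q : R} (f : P ⟶ Q) : (Cf R f).d1 = f := rfl
@[simp] lemma dagger_d0 (A : Z2Cx R) : (dagger R A).d0 = -A.d1 := rfl
@[simp] lemma dagger_d1 (A : Z2Cx R) : (dagger R A).d1 = -A.d0 := rfl

/-- A morphism of complexes whose two components are isomorphisms is an isomorphism. -/
def isoOfHom {M N : Z2Cx R} (h : M ⟶ N) (i0 : IsIso h.f0) (i1 : IsIso h.f1) : M ≅ N := by
  letI := i0; letI := i1
  exact
  { hom := h
    inv := ⟨inv h.f0, inv h.f1,
      by rw [IsIso.comp_inv_eq, Category.assoc, h.comm0, IsIso.inv_hom_id_assoc],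
      by rw [IsIso.comp_inv_eq, Category.assoc, h.comm1, IsIso.inv_hom_id_assoc]⟩
    hom_inv_id := by apply Hom.ext <;> simp
    inv_hom_id := by apply Hom.ext <;> simp }

/-- Uniqueness of the decomposition, as a statement about two abstract decompositions. -/
theorem cfUniq {P Q P' Q' P₂ Q₂ P₂' Q₂' : R} (f : P ⟶ Q) (g : P' ⟶ Q')
    (f₂ : P₂ ⟶ Q₂) (g₂ : P₂' ⟶ Q₂')
    (hf : Mono f) (hg : Mono g) (hf₂ : Mono f₂) (hg₂ : Mono g₂)
    (Θ : dsum R (Cf R f) (dagger R (Cf R g)) ≅ dsum R (Cf R f₂) (dagger R (Cf R g₂))) :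
    Nonempty (Cf R f ≅ Cf R f₂) ∧ Nonempty (Cf R g ≅ Cf R g₂) := by
  have hc1 := Θ.hom.comm1
  have hc0 := Θ.hom.comm0
  have ic1 := Θ.inv.comm1
  have ic0 := Θ.inv.comm0
  simp only [dsum_d0, dsum_d1, Cf_d0, Cf_d1, dagger_d0, dagger_d1, neg_zero, neg_neg]
    at hc1 hc0 ic1 ic0
  have h00 : Θ.hom.f0 ≫ Θ.inv.f0 = 𝟙 _ := by
    have := congrArg Hom.f0 Θ.hom_inv_id; simpa only [comp_f0, id_f0] using this
  have h11 : Θ.hom.f1 ≫ Θ.inv.f1 = 𝟙 _ := by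
    have := congrArg Hom.f1 Θ.hom_inv_id; simpa only [comp_f1, id_f1] using this
  have i00 : Θ.inv.f0 ≫ Θ.hom.f0 = 𝟙 _ := by
    have := congrArg Hom.f0 Θ.inv_hom_id; simpa only [comp_f0, id_f0] using this
  have i11 : Θ.inv.f1 ≫ Θ.hom.f1 = 𝟙 _ := by
    have := congrArg Hom.f1 Θ.inv_hom_id; simpa only [comp_f1, id_f1] using this
  set a0 : Q ⊞ P' ⟶ Q₂ ⊞ P₂' := Θ.hom.f0 with ha0
  set a1 : P ⊞ Q' ⟶ P₂ ⊞ Q₂' := Θ.hom.f1 with ha1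
  set b0 : Q₂ ⊞ P₂' ⟶ Q ⊞ P' := Θ.inv.f0 with hb0
  set b1 : P₂ ⊞ Q₂' ⟶ P ⊞ Q' := Θ.inv.f1 with hb1
  replace hc1 : biprod.map f (0 : Q' ⟶ P') ≫ a0 = a1 ≫ biprod.map f₂ (0 : Q₂' ⟶ P₂') := hc1
  replace ic1 : biprod.map f₂ (0 : Q₂' ⟶ P₂') ≫ b0 = b1 ≫ biprod.map f (0 : Q' ⟶ P') := ic1
  replace hc0 : biprod.map (0 : Q ⟶ P) (-g) ≫ a1 = a0 ≫ biprod.map (0 : Q₂ ⟶ P₂) (-g₂) := hc0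
  replace ic0 : biprod.map (0 : Q₂ ⟶ P₂) (-g₂) ≫ b1 = b0 ≫ biprod.map (0 : Q ⟶ P) (-g) := ic0
  replace h00 : a0 ≫ b0 = 𝟙 (Q ⊞ P') := h00
  replace h11 : a1 ≫ b1 = 𝟙 (P ⊞ Q') := h11
  replace i00 : b0 ≫ a0 = 𝟙 (Q₂ ⊞ P₂') := i00
  replace i11 : b1 ≫ a1 = 𝟙 (P₂ ⊞ Q₂') := i11
  -- the lower-left components in degree 1 vanish
  have cAh : (biprod.inr : (Q':R) ⟶ _) ≫ a1 ≫ biprod.fst = 0 := by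
    rw [← cancel_mono f₂]
    calc (biprod.inr ≫ a1 ≫ biprod.fst) ≫ f₂
        = biprod.inr ≫ (a1 ≫ biprod.map f₂ 0) ≫ biprod.fst := by
          simp
      _ = biprod.inr ≫ (biprod.map f 0 ≫ a0) ≫ biprod.fst := by rw [← hc1]
      _ = 0 ≫ f₂ := by simp
  have cAi : (biprod.inr : (Q₂':R) ⟶ _) ≫ b1 ≫ biprod.fst = 0 := by
    rw [← cancel_mono f]
    calc (biprod.inr ≫ b1 ≫ biprod.fst) ≫ f
        = biprod.inr ≫ (b1 ≫ biprod.map f 0) ≫ biprod.fst := by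
          simp
      _ = biprod.inr ≫ (biprod.map f₂ 0 ≫ b0) ≫ biprod.fst := by rw [← ic1]
      _ = 0 ≫ f := by simp
  -- the upper-right components in degree 0 vanish
  have cBh : (biprod.inl : (Q:R) ⟶ _) ≫ a0 ≫ biprod.snd = 0 := by
    rw [← cancel_mono g₂, ← neg_inj]
    calc -((biprod.inl ≫ a0 ≫ biprod.snd) ≫ g₂)
        = biprod.inl ≫ (a0 ≫ biprod.map 0 (-g₂)) ≫ biprod.snd := by
          simp
      _ = biprod.inl ≫ (biprod.map 0 (-g) ≫ a1) ≫ biprod.snd := by rw [← hc0]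
      _ = -(0 ≫ g₂) := by simp
  have cBi : (biprod.inl : (Q₂:R) ⟶ _) ≫ b0 ≫ biprod.snd = 0 := by
    rw [← cancel_mono g, ← neg_inj]
    calc -((biprod.inl ≫ b0 ≫ biprod.snd) ≫ g)
        = biprod.inl ≫ (b0 ≫ biprod.map 0 (-g)) ≫ biprod.snd := by
          simp
      _ = biprod.inl ≫ (biprod.map 0 (-g₂) ≫ b1) ≫ biprod.snd := by rw [← ic0]
      _ = -(0 ≫ g) := by simp
  constructor
  · refine ⟨isoOfHom
      (⟨biprod.inl ≫ a0 ≫ biprod.fst, biprod.inl ≫ a1 ≫ biprod.fst,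
        by simp, ?_⟩ : Cf R f ⟶ Cf R f₂) ?_ ?_⟩
    · show f ≫ biprod.inl ≫ a0 ≫ biprod.fst =
        (biprod.inl ≫ a1 ≫ biprod.fst) ≫ f₂
      calc f ≫ biprod.inl ≫ a0 ≫ biprod.fst
          = biprod.inl ≫ (biprod.map f 0 ≫ a0) ≫ biprod.fst := by
            simp
        _ = biprod.inl ≫ (a1 ≫ biprod.map f₂ 0) ≫ biprod.fst := by rw [hc1]
        _ = (biprod.inl ≫ a1 ≫ biprod.fst) ≫ f₂ := by simp
    · exact ⟨⟨biprod.inl ≫ b0 ≫ biprod.fst,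
        diag_fst_left _ _ h00 cBh, diag_fst_left _ _ i00 cBi⟩⟩
    · exact ⟨⟨biprod.inl ≫ b1 ≫ biprod.fst,
        diag_fst_right _ _ h11 cAi, diag_fst_right _ _ i11 cAh⟩⟩
  · refine ⟨isoOfHom
      (⟨biprod.inr ≫ a1 ≫ biprod.snd, biprod.inr ≫ a0 ≫ biprod.snd,
        by simp, ?_⟩ : Cf R g ⟶ Cf R g₂) ?_ ?_⟩
    · show g ≫ biprod.inr ≫ a1 ≫ biprod.snd =
        (biprod.inr ≫ a0 ≫ biprod.snd) ≫ g₂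
      rw [← neg_inj]
      calc -(g ≫ biprod.inr ≫ a1 ≫ biprod.snd)
          = biprod.inr ≫ (biprod.map 0 (-g) ≫ a1) ≫ biprod.snd := by
            simp
        _ = biprod.inr ≫ (a0 ≫ biprod.map 0 (-g₂)) ≫ biprod.snd := by rw [hc0]
        _ = -((biprod.inr ≫ a0 ≫ biprod.snd) ≫ g₂) := by simp
    · exact ⟨⟨biprod.inr ≫ b1 ≫ biprod.snd,
        diag_snd_left _ _ h11 cAh, diag_snd_left _ _ i11 cAi⟩⟩
    · exact ⟨⟨biprod.inr ≫ b0 ≫ biprod.snd,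
        diag_snd_right _ _ h00 cBi, diag_snd_right _ _ i00 cBh⟩⟩

end Z2Cx

end Aux

theorem stmt3 (hH : Hereditary k R) (hc : CondC R) (hd : CondD R) (he : CondE R)
    (M : Z2Cx R) (h0 : Projective M.X0) (h1 : Projective M.X1) :
    ∃ (P Q P' Q' : R) (f : P ⟶ Q) (g : P' ⟶ Q'),
      Projective P ∧ Projective Q ∧ Projective P' ∧ Projective Q' ∧
      Mono f ∧ Mono g ∧
      Nonempty (M ≅ dsum R (Cf R f) (dagger R (Cf R g))) ∧
      Nonempty (H0 R M ≅ cokernel f) ∧ Nonempty (H1 R M ≅ cokernel g) ∧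
      (∀ (P₂ Q₂ P₂' Q₂' : R) (f₂ : P₂ ⟶ Q₂) (g₂ : P₂' ⟶ Q₂'),
        Projective P₂ → Projective Q₂ → Projective P₂' → Projective Q₂' →
        Mono f₂ → Mono g₂ →
        Nonempty (M ≅ dsum R (Cf R f₂) (dagger R (Cf R g₂))) →
        Nonempty (Cf R f ≅ Cf R f₂) ∧ Nonempty (Cf R g ≅ Cf R g₂)) := by
  haveI := h0; haveI := h1
  let l0 : M.X0 ⟶ kernel M.d1 := kernel.lift M.d1 M.d0 M.d01
  let l1 : M.X1 ⟶ kernel M.d0 := kernel.lift M.d0 M.d1 M.d10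
  let k0 : kernel M.d0 ⟶ M.X0 := kernel.ι M.d0
  let k1 : kernel M.d1 ⟶ M.X1 := kernel.ι M.d1
  let e0 : M.X0 ⟶ image l0 := factorThruImage l0
  let e1 : M.X1 ⟶ image l1 := factorThruImage l1
  let gg : image l0 ⟶ kernel M.d1 := image.ι l0
  let ff : image l1 ⟶ kernel M.d0 := image.ι l1
  have hd0 : e0 ≫ gg ≫ k1 = M.d0 := by
    rw [← Category.assoc]
    show (factorThruImage l0 ≫ image.ι l0) ≫ k1 = M.d0
    rw [image.fac l0]; exact kernel.lift_ι _ _ _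
  have hd1 : e1 ≫ ff ≫ k0 = M.d1 := by
    rw [← Category.assoc]
    show (factorThruImage l1 ≫ image.ι l1) ≫ k0 = M.d1
    rw [image.fac l1]; exact kernel.lift_ι _ _ _
  -- projectivity of the four pieces
  haveI hMgg : Mono (gg ≫ k1) := mono_comp _ _
  haveI hMff : Mono (ff ≫ k0) := mono_comp _ _
  haveI pI1 : Projective (image l1) := projective_of_mono hH (ff ≫ k0)
  haveI pZ0 : Projective (kernel M.d0) := projective_of_mono hH k0
  haveI pI0 : Projective (image l0) := projective_of_mono hH (gg ≫ k1)
  haveI pZ1 : Projective (kernel M.d1) := projective_of_mono hH k1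
  -- sections
  haveI hEe0 : Epi e0 := by show Epi (factorThruImage l0); infer_instance
  haveI hEe1 : Epi e1 := by show Epi (factorThruImage l1); infer_instance
  let s0 : image l0 ⟶ M.X0 := Projective.factorThru (𝟙 (image l0)) e0
  let s1 : image l1 ⟶ M.X1 := Projective.factorThru (𝟙 (image l1)) e1
  have hs0 : s0 ≫ e0 = 𝟙 (image l0) := Projective.factorThru_comp _ _
  have hs1 : s1 ≫ e1 = 𝟙 (image l1) := Projective.factorThru_comp _ _
  -- orthogonality relations
  have hk0e0 : k0 ≫ e0 = 0 := by
    rw [← cancel_mono (gg ≫ k1)]; simp only [Category.assoc]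
    rw [hd0]; simp [k0]
  have hk1e1 : k1 ≫ e1 = 0 := by
    rw [← cancel_mono (ff ≫ k0)]; simp only [Category.assoc]
    rw [hd1]; simp [k1]
  have hd0e1 : M.d0 ≫ e1 = 0 := by
    rw [← cancel_mono (ff ≫ k0)]; simp only [Category.assoc]
    rw [hd1]; simp [M.d01]
  have hd1e0 : M.d1 ≫ e0 = 0 := by
    rw [← cancel_mono (gg ≫ k1)]; simp only [Category.assoc]
    rw [hd0]; simp [M.d10]
  -- retractions onto the kernels
  have hπ0 : (𝟙 M.X0 - e0 ≫ s0) ≫ M.d0 = 0 := by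
    rw [← hd0]; simp [Preadditive.sub_comp, reassoc_of% hs0]
  have hπ1 : (𝟙 M.X1 - e1 ≫ s1) ≫ M.d1 = 0 := by
    rw [← hd1]; simp [Preadditive.sub_comp, reassoc_of% hs1]
  let r0 : M.X0 ⟶ kernel M.d0 := kernel.lift M.d0 (𝟙 M.X0 - e0 ≫ s0) hπ0
  let r1 : M.X1 ⟶ kernel M.d1 := kernel.lift M.d1 (𝟙 M.X1 - e1 ≫ s1) hπ1
  have hr0 : r0 ≫ k0 = 𝟙 M.X0 - e0 ≫ s0 := kernel.lift_ι _ _ _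
  have hr1 : r1 ≫ k1 = 𝟙 M.X1 - e1 ≫ s1 := kernel.lift_ι _ _ _
  have hk0r0 : k0 ≫ r0 = 𝟙 (kernel M.d0) := by
    rw [← cancel_mono k0, Category.assoc, hr0]
    simp [Preadditive.comp_sub, reassoc_of% hk0e0]
  have hk1r1 : k1 ≫ r1 = 𝟙 (kernel M.d1) := by
    rw [← cancel_mono k1, Category.assoc, hr1]
    simp [Preadditive.comp_sub, reassoc_of% hk1e1]
  have hs0r0 : s0 ≫ r0 = 0 := by
    rw [← cancel_mono k0, Category.assoc, hr0]
    simp [Preadditive.comp_sub, reassoc_of% hs0]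
  have hs1r1 : s1 ≫ r1 = 0 := by
    rw [← cancel_mono k1, Category.assoc, hr1]
    simp [Preadditive.comp_sub, reassoc_of% hs1]
  have hd0r1 : M.d0 ≫ r1 = e0 ≫ gg := by
    rw [← cancel_mono k1, Category.assoc, hr1]
    simp [Preadditive.comp_sub, reassoc_of% hd0e1, hd0]
  have hd1r0 : M.d1 ≫ r0 = e1 ≫ ff := by
    rw [← cancel_mono k0, Category.assoc, hr0]
    simp [Preadditive.comp_sub, reassoc_of% hd1e0, hd1]
  -- the isomorphism of complexes
  let N : Z2Cx R := dsum R (Cf R ff) (dagger R (Cf R gg))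
  have Nd0 : N.d0 = biprod.map (0 : kernel M.d0 ⟶ image l1) (-gg) := by
    show (dsum R (Cf R ff) (dagger R (Cf R gg))).d0 = _
    simp; rfl
  have Nd1 : N.d1 = biprod.map ff (0 : kernel M.d1 ⟶ image l0) := by
    show (dsum R (Cf R ff) (dagger R (Cf R gg))).d1 = _
    simp; rfl
  have comm0 : M.d0 ≫ biprod.lift e1 r1 = biprod.lift r0 (-e0) ≫ N.d0 := by
    show M.d0 ≫ biprod.lift e1 r1 = biprod.lift r0 (-e0) ≫ biprod.map (0 : kernel M.d0 ⟶ image l1) (-gg)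
    apply biprod.hom_ext
    · simp [biprod.map_fst, hd0e1]
    · simp [biprod.map_snd, hd0r1]
  have comm1 : M.d1 ≫ biprod.lift r0 (-e0) = biprod.lift e1 r1 ≫ N.d1 := by
    show M.d1 ≫ biprod.lift r0 (-e0) = biprod.lift e1 r1 ≫ biprod.map ff (-(0 : kernel M.d1 ⟶ image l0))
    rw [neg_zero]
    apply biprod.hom_ext
    · simp [biprod.map_fst, hd1r0]
    · simp [biprod.map_snd, hd1e0]
  have hφ0a : biprod.lift r0 (-e0) ≫ biprod.desc k0 (-s0) = 𝟙 M.X0 := by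
    rw [biprod.lift_desc, hr0]; simp
  have hφ0b : biprod.desc k0 (-s0) ≫ biprod.lift r0 (-e0) = 𝟙 _ := by
    apply biprod.hom_ext' <;> apply biprod.hom_ext <;>
      simp [hk0r0, hk0e0, hs0r0, hs0]
  have hφ1a : biprod.lift e1 r1 ≫ biprod.desc s1 k1 = 𝟙 M.X1 := by
    rw [biprod.lift_desc, hr1]; simp
  have hφ1b : biprod.desc s1 k1 ≫ biprod.lift e1 r1 = 𝟙 _ := by
    apply biprod.hom_ext' <;> apply biprod.hom_ext <;>
      simp [hk1r1, hk1e1, hs1r1, hs1]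
  let E : M ≅ N := isoOfHom
    (⟨biprod.lift r0 (-e0), biprod.lift e1 r1, comm0, comm1⟩ : M ⟶ N)
    ⟨⟨biprod.desc k0 (-s0), hφ0a, hφ0b⟩⟩ ⟨⟨biprod.desc s1 k1, hφ1a, hφ1b⟩⟩
  -- homology identifications
  have H0iso : H0 R M ≅ cokernel ff :=
    (ShortComplex.LeftHomologyData.ofHasKernelOfHasCokernel
        (ShortComplex.mk M.d1 M.d0 M.d10)).homologyIso ≪≫
      cokernelIsoOfEq (image.fac l1).symm ≪≫ cokernelEpiComp (factorThruImage l1) (image.ι l1)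
  have H1iso : H1 R M ≅ cokernel gg :=
    (ShortComplex.LeftHomologyData.ofHasKernelOfHasCokernel
        (ShortComplex.mk M.d0 M.d1 M.d01)).homologyIso ≪≫
      cokernelIsoOfEq (image.fac l0).symm ≪≫ cokernelEpiComp (factorThruImage l0) (image.ι l0)
  refine ⟨image l1, kernel M.d0, image l0, kernel M.d1, ff, gg,
    pI1, pZ0, pI0, pZ1, ?_, ?_, ⟨E⟩, ⟨H0iso⟩, ⟨H1iso⟩, ?_⟩
  · show Mono (image.ι l1); infer_instance
  · show Mono (image.ι l0); infer_instance
  · intro P₂ Q₂ P₂' Q₂' f₂ g₂ hp2 hq2 hp2' hq2' hm2 hm2' hE2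
    obtain ⟨E₂⟩ := hE2
    exact cfUniq ff gg f₂ g₂
      (by show Mono (image.ι l1); infer_instance)
      (by show Mono (image.ι l0); infer_instance)
      hm2 hm2' (E.symm ≪≫ E₂)

end
end

section
/- Let f: P → Q and f': P' → Q' be injective morphisms in P. Then coker(f) ≅ coker(f') in R if and only if there exist objects L, L' ∈ P and an isomorphism of complexes C_f ⊕ K_{L'} ≅ K_L ⊕ C_{f'} in C(P). -/
set_option linter.unusedSectionVars false

open CategoryTheory CategoryTheory.Limits Opposite

noncomputable section

universe u

variable (k : Type) [Field k] [Fintype k]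
variable (R : Type u) [SmallCategory R] [Abelian R] [Linear k R] [EnoughProjectives R]

open Z2Cx

/-!
Lift `φ : coker f ≅ coker f'` and its inverse through the projectives to `b : Q ⟶ Q'` and
`b' : Q' ⟶ Q`. The automorphism `Φ₀ = (1 -b'; b 1-bb')` of `Q ⊕ Q'`, a product of two unipotent
matrices, maps the image of `f ⊕ 1` into that of `1 ⊕ f'` and `Φ₀⁻¹` maps it back, because these
images are the kernels of the projections to `coker f ≅ coker f'`. So `Φ₀` restricts to
`Φ₁ : P ⊕ Q' ≅ Q ⊕ P'`, and `(Φ₀, Φ₁)` is the required isomorphism of complexes with `L = Q`,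
`L' = Q'`. Conversely, `d₁` of an isomorphism of complexes induces an isomorphism of cokernels, and
the summands `K_L`, `K_L'` do not change them.
-/

section
variable {C : Type*} [Category C] [Abelian C] {X Y : C}

def cokernelBiprodMapIdIso (f : X ⟶ Y) (L : C) :
    cokernel (biprod.map f (𝟙 L)) ≅ cokernel f where
  hom := cokernel.desc _ (biprod.fst ≫ cokernel.π f) (by simp)
  inv := cokernel.desc f (biprod.inl ≫ cokernel.π _)
    (by rw [← Category.assoc, ← biprod.inl_map, Category.assoc, cokernel.condition, comp_zero])
  hom_inv_id := by
    have hinr : biprod.inr ≫ cokernel.π (biprod.map f (𝟙 L)) = 0 := by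
      rw [← Category.id_comp biprod.inr, ← biprod.inr_map, Category.assoc, cokernel.condition,
        comp_zero]
    ext <;> simp [hinr]

def cokernelBiprodIdMapIso (f : X ⟶ Y) (L : C) :
    cokernel (biprod.map (𝟙 L) f) ≅ cokernel f where
  hom := cokernel.desc _ (biprod.snd ≫ cokernel.π f) (by simp)
  inv := cokernel.desc f (biprod.inr ≫ cokernel.π _)
    (by rw [← Category.assoc, ← biprod.inr_map, Category.assoc, cokernel.condition, comp_zero])
  hom_inv_id := by
    have hinl : biprod.inl ≫ cokernel.π (biprod.map (𝟙 L) f) = 0 := by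
      rw [← Category.id_comp biprod.inl, ← biprod.inl_map, Category.assoc, cokernel.condition,
        comp_zero]
    ext <;> simp [hinl]

theorem exists_iso_comp_eq_of_comp_cokernel_π_eq_zero {X₁ X₂ Y Y' : C}
    (m₁ : X₁ ⟶ Y) (m₂ : X₂ ⟶ Y') [Mono m₁] [Mono m₂] (e : Y ≅ Y')
    (h₁ : m₁ ≫ e.hom ≫ cokernel.π m₂ = 0) (h₂ : m₂ ≫ e.inv ≫ cokernel.π m₁ = 0) :
    ∃ e' : X₁ ≅ X₂, m₁ ≫ e.hom = e'.hom ≫ m₂ := by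
  refine ⟨⟨Abelian.monoLift m₂ (m₁ ≫ e.hom) (by simpa using h₁),
    Abelian.monoLift m₁ (m₂ ≫ e.inv) (by simpa using h₂), ?_, ?_⟩, by simp⟩
  · simp [← cancel_mono m₁]
  · simp [← cancel_mono m₂]

theorem exists_biprod_iso_of_cokernel_iso {P Q P' Q' : C} [Projective Q] [Projective Q']
    (f : P ⟶ Q) (f' : P' ⟶ Q') [Mono f] [Mono f'] (φ : cokernel f ≅ cokernel f') :
    ∃ (Φ₀ : Q ⊞ Q' ≅ Q ⊞ Q') (Φ₁ : P ⊞ Q' ≅ Q ⊞ P'),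
      biprod.map f (𝟙 Q') ≫ Φ₀.hom = Φ₁.hom ≫ biprod.map (𝟙 Q) f' := by
  obtain ⟨b, hb⟩ : ∃ b : Q ⟶ Q', b ≫ cokernel.π f' = cokernel.π f ≫ φ.hom :=
    ⟨Projective.factorThru _ _, Projective.factorThru_comp _ _⟩
  obtain ⟨b', hb'⟩ : ∃ b' : Q' ⟶ Q, b' ≫ cokernel.π f = cokernel.π f' ≫ φ.inv :=
    ⟨Projective.factorThru _ _, Projective.factorThru_comp _ _⟩
  let Φ₀ := Biprod.unipotentLower (-b') ≪≫ Biprod.unipotentUpper b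
  refine ⟨Φ₀, exists_iso_comp_eq_of_comp_cokernel_π_eq_zero _ _ Φ₀ ?_ ?_⟩
  · rw [← cancel_mono (cokernelBiprodIdMapIso f' Q).hom]
    ext <;> simp [Φ₀, Biprod.ofComponents, cokernelBiprodIdMapIso, hb, reassoc_of% hb']
  · rw [← cancel_mono (cokernelBiprodMapIdIso f Q').hom]
    ext <;> simp [Φ₀, Biprod.ofComponents, cokernelBiprodMapIdIso, hb', reassoc_of% hb]

end

namespace Z2Cx

variable {R}

def isoMk {M N : Z2Cx R} (e₀ : M.X0 ≅ N.X0) (e₁ : M.X1 ≅ N.X1)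
    (comm0 : M.d0 ≫ e₁.hom = e₀.hom ≫ N.d0) (comm1 : M.d1 ≫ e₀.hom = e₁.hom ≫ N.d1) :
    M ≅ N where
  hom := ⟨e₀.hom, e₁.hom, comm0, comm1⟩
  inv := ⟨e₀.inv, e₁.inv, by simp [Iso.comp_inv_eq, comm0], by simp [Iso.comp_inv_eq, comm1]⟩
  hom_inv_id := Hom.ext e₀.hom_inv_id e₁.hom_inv_id
  inv_hom_id := Hom.ext e₀.inv_hom_id e₁.inv_hom_id

def isoX0 {M N : Z2Cx R} (e : M ≅ N) : M.X0 ≅ N.X0 :=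
  ⟨e.hom.f0, e.inv.f0, congrArg Hom.f0 e.hom_inv_id, congrArg Hom.f0 e.inv_hom_id⟩

def isoX1 {M N : Z2Cx R} (e : M ≅ N) : M.X1 ≅ N.X1 :=
  ⟨e.hom.f1, e.inv.f1, congrArg Hom.f1 e.hom_inv_id, congrArg Hom.f1 e.inv_hom_id⟩

end Z2Cx

theorem stmt6 {P Q P' Q' : R} (hQ : Projective Q) (hQ' : Projective Q')
    (f : P ⟶ Q) (f' : P' ⟶ Q') (hf : Mono f) (hf' : Mono f') :
    Nonempty (cokernel f ≅ cokernel f') ↔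
      ∃ (L L' : R), Projective L ∧ Projective L' ∧
        Nonempty (dsum R (Cf R f) (KP R L') ≅ dsum R (KP R L) (Cf R f')) := by
  constructor
  · rintro ⟨φ⟩
    obtain ⟨Φ₀, Φ₁, comm⟩ := exists_biprod_iso_of_cokernel_iso f f' φ
    exact ⟨Q, Q', hQ, hQ', ⟨isoMk Φ₀ Φ₁ (by dsimp [dsum, Cf, KP]; ext <;> simp) comm⟩⟩
  · rintro ⟨L, L', -, -, ⟨e⟩⟩
    exact ⟨(cokernelBiprodMapIdIso f L').symm ≪≫
      cokernel.mapIso _ _ (isoX1 e) (isoX0 e) e.hom.comm1 ≪≫ cokernelBiprodIdMapIso f' L⟩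

end
end

section
/- Let M•, M•' ∈ C(P). There exist acyclic complexes K•, K•' ∈ C(P) and an isomorphism M• ⊕ K•' ≅ K• ⊕ M•' if and only if H•(M•) ≅ H•(M•') in C(R). -/
set_option linter.unusedSectionVars false

open CategoryTheory CategoryTheory.Limits Opposite

noncomputable section

universe u

variable (k : Type) [Field k] [Fintype k]
variable (R : Type u) [SmallCategory R] [Abelian R] [Linear k R] [EnoughProjectives R]

open Z2Cx


/-! ### Infrastructure -/

namespace Br

open ZeroObject Z2Cx CategoryTheory.ShortComplex

variable {R : Type u} [SmallCategory R] [Abelian R] [EnoughProjectives R]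


@[simp] lemma comp_f0' {M N P : Z2Cx R} (f : M ⟶ N) (g : N ⟶ P) :
    (f ≫ g).f0 = f.f0 ≫ g.f0 := rfl
@[simp] lemma comp_f1' {M N P : Z2Cx R} (f : M ⟶ N) (g : N ⟶ P) :
    (f ≫ g).f1 = f.f1 ≫ g.f1 := rfl
@[simp] lemma id_f0' (M : Z2Cx R) : Z2Cx.Hom.f0 (𝟙 M) = 𝟙 M.X0 := rfl
@[simp] lemma id_f1' (M : Z2Cx R) : Z2Cx.Hom.f1 (𝟙 M) = 𝟙 M.X1 := rfl

/-- Build an isomorphism of `ℤ/2`-complexes from component isomorphisms. -/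
def mkIso {M N : Z2Cx R} (e0 : M.X0 ≅ N.X0) (e1 : M.X1 ≅ N.X1)
    (comm0 : M.d0 ≫ e1.hom = e0.hom ≫ N.d0) (comm1 : M.d1 ≫ e0.hom = e1.hom ≫ N.d1) :
    M ≅ N where
  hom := ⟨e0.hom, e1.hom, comm0, comm1⟩
  inv := ⟨e0.inv, e1.inv, by
      rw [← cancel_epi e0.hom, ← Category.assoc, ← comm0, Category.assoc, e1.hom_inv_id,
        Category.comp_id, Iso.hom_inv_id_assoc], by
      rw [← cancel_epi e1.hom, ← Category.assoc, ← comm1, Category.assoc, e0.hom_inv_id,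
        Category.comp_id, Iso.hom_inv_id_assoc]⟩
  hom_inv_id := by apply Z2Cx.Hom.ext <;> simp
  inv_hom_id := by apply Z2Cx.Hom.ext <;> simp

/-- The short complex whose homology is `H0`. -/
abbrev SC0 (M : Z2Cx R) : ShortComplex R := ShortComplex.mk M.d1 M.d0 M.d10

/-- The short complex whose homology is `H1`. -/
abbrev SC1 (M : Z2Cx R) : ShortComplex R := ShortComplex.mk M.d0 M.d1 M.d01

lemma H0_def (M : Z2Cx R) : H0 R M = (SC0 M).homology := rfl
lemma H1_def (M : Z2Cx R) : H1 R M = (SC1 M).homology := rfl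

/-- Component iso in degree 0 of an iso of complexes. -/
def isoX0 {M N : Z2Cx R} (e : M ≅ N) : M.X0 ≅ N.X0 where
  hom := e.hom.f0
  inv := e.inv.f0
  hom_inv_id := by rw [← comp_f0, e.hom_inv_id, id_f0]
  inv_hom_id := by rw [← comp_f0, e.inv_hom_id, id_f0]

/-- Component iso in degree 1 of an iso of complexes. -/
def isoX1 {M N : Z2Cx R} (e : M ≅ N) : M.X1 ≅ N.X1 where
  hom := e.hom.f1
  inv := e.inv.f1
  hom_inv_id := by rw [← comp_f1, e.hom_inv_id, id_f1]
  inv_hom_id := by rw [← comp_f1, e.inv_hom_id, id_f1]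

/-- Iso of `SC0` short complexes induced by an iso of complexes. -/
def SC0Iso {M N : Z2Cx R} (e : M ≅ N) : SC0 M ≅ SC0 N :=
  ShortComplex.isoMk (isoX1 e) (isoX0 e) (isoX1 e) e.hom.comm1.symm e.hom.comm0.symm

/-- Iso of `SC1` short complexes induced by an iso of complexes. -/
def SC1Iso {M N : Z2Cx R} (e : M ≅ N) : SC1 M ≅ SC1 N :=
  ShortComplex.isoMk (isoX0 e) (isoX1 e) (isoX0 e) e.hom.comm0.symm e.hom.comm1.symm

/-- `H0` is invariant under isomorphism. -/
def H0Iso {M N : Z2Cx R} (e : M ≅ N) : H0 R M ≅ H0 R N :=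
  ShortComplex.homologyMapIso (SC0Iso e)

/-- `H1` is invariant under isomorphism. -/
def H1Iso {M N : Z2Cx R} (e : M ≅ N) : H1 R M ≅ H1 R N :=
  ShortComplex.homologyMapIso (SC1Iso e)

section dsumH

variable (M N : Z2Cx R)

/-- Inclusion of `SC0 M` into `SC0 (dsum M N)`. -/
def inlSC0 : SC0 M ⟶ SC0 (dsum R M N) := ⟨biprod.inl, biprod.inl, biprod.inl, by simp [dsum], by simp [dsum]⟩
def inrSC0 : SC0 N ⟶ SC0 (dsum R M N) := ⟨biprod.inr, biprod.inr, biprod.inr, by simp [dsum], by simp [dsum]⟩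
def fstSC0 : SC0 (dsum R M N) ⟶ SC0 M := ⟨biprod.fst, biprod.fst, biprod.fst, by simp [dsum], by simp [dsum]⟩
def sndSC0 : SC0 (dsum R M N) ⟶ SC0 N := ⟨biprod.snd, biprod.snd, biprod.snd, by simp [dsum], by simp [dsum]⟩

def inlSC1 : SC1 M ⟶ SC1 (dsum R M N) := ⟨biprod.inl, biprod.inl, biprod.inl, by simp [dsum], by simp [dsum]⟩
def inrSC1 : SC1 N ⟶ SC1 (dsum R M N) := ⟨biprod.inr, biprod.inr, biprod.inr, by simp [dsum], by simp [dsum]⟩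
def fstSC1 : SC1 (dsum R M N) ⟶ SC1 M := ⟨biprod.fst, biprod.fst, biprod.fst, by simp [dsum], by simp [dsum]⟩
def sndSC1 : SC1 (dsum R M N) ⟶ SC1 N := ⟨biprod.snd, biprod.snd, biprod.snd, by simp [dsum], by simp [dsum]⟩

/-- A general biproduct recognition helper. -/
def biprodIsoOf {A B X : R} (p : X ⟶ A) (q : X ⟶ B) (i : A ⟶ X) (j : B ⟶ X)
    (h1 : i ≫ p = 𝟙 A) (h2 : j ≫ q = 𝟙 B) (h3 : i ≫ q = 0) (h4 : j ≫ p = 0)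
    (h5 : p ≫ i + q ≫ j = 𝟙 X) : X ≅ A ⊞ B where
  hom := biprod.lift p q
  inv := biprod.desc i j
  hom_inv_id := by rw [biprod.lift_desc, h5]
  inv_hom_id := by ext <;> simp [h1, h2, h3, h4]

/-- `H0` of a direct sum. -/
def H0dsum : H0 R (dsum R M N) ≅ H0 R M ⊞ H0 R N := by
  refine biprodIsoOf (X := (SC0 (dsum R M N)).homology) (A := (SC0 M).homology)
    (B := (SC0 N).homology) (homologyMap (fstSC0 M N)) (homologyMap (sndSC0 M N))
    (homologyMap (inlSC0 M N)) (homologyMap (inrSC0 M N)) ?_ ?_ ?_ ?_ ?_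
  · rw [← homologyMap_comp,
      show inlSC0 M N ≫ fstSC0 M N = 𝟙 (SC0 M) by ext <;> simp [inlSC0, fstSC0, dsum]]
    exact homologyMap_id _
  · rw [← homologyMap_comp,
      show inrSC0 M N ≫ sndSC0 M N = 𝟙 (SC0 N) by ext <;> simp [inrSC0, sndSC0, dsum]]
    exact homologyMap_id _
  · rw [← homologyMap_comp,
      show inlSC0 M N ≫ sndSC0 M N = 0 by ext <;> simp [inlSC0, sndSC0, dsum]]
    exact homologyMap_zero _ _
  · rw [← homologyMap_comp,
      show inrSC0 M N ≫ fstSC0 M N = 0 by ext <;> simp [inrSC0, fstSC0, dsum]]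
    exact homologyMap_zero _ _
  · rw [← homologyMap_comp, ← homologyMap_comp, ← homologyMap_add,
      show fstSC0 M N ≫ inlSC0 M N + sndSC0 M N ≫ inrSC0 M N = 𝟙 (SC0 (dsum R M N)) by
        ext <;> exact biprod.total]
    exact homologyMap_id _

/-- `H1` of a direct sum. -/
def H1dsum : H1 R (dsum R M N) ≅ H1 R M ⊞ H1 R N := by
  refine biprodIsoOf (X := (SC1 (dsum R M N)).homology) (A := (SC1 M).homology)
    (B := (SC1 N).homology) (homologyMap (fstSC1 M N)) (homologyMap (sndSC1 M N))
    (homologyMap (inlSC1 M N)) (homologyMap (inrSC1 M N)) ?_ ?_ ?_ ?_ ?_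
  · rw [← homologyMap_comp,
      show inlSC1 M N ≫ fstSC1 M N = 𝟙 (SC1 M) by ext <;> simp [inlSC1, fstSC1, dsum]]
    exact homologyMap_id _
  · rw [← homologyMap_comp,
      show inrSC1 M N ≫ sndSC1 M N = 𝟙 (SC1 N) by ext <;> simp [inrSC1, sndSC1, dsum]]
    exact homologyMap_id _
  · rw [← homologyMap_comp,
      show inlSC1 M N ≫ sndSC1 M N = 0 by ext <;> simp [inlSC1, sndSC1, dsum]]
    exact homologyMap_zero _ _
  · rw [← homologyMap_comp,
      show inrSC1 M N ≫ fstSC1 M N = 0 by ext <;> simp [inrSC1, fstSC1, dsum]]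
    exact homologyMap_zero _ _
  · rw [← homologyMap_comp, ← homologyMap_comp, ← homologyMap_add,
      show fstSC1 M N ≫ inlSC1 M N + sndSC1 M N ≫ inrSC1 M N = 𝟙 (SC1 (dsum R M N)) by
        ext <;> exact biprod.total]
    exact homologyMap_id _

end dsumH

lemma isZero_biprod {X Y : R} (hX : IsZero X) (hY : IsZero Y) : IsZero (X ⊞ Y) :=
  hX.of_iso ((isoBiprodZero hY).symm)

/-- `X ⊞ Y ≅ X` when `Y` is zero. -/
def biprodIsoOfIsZero {X Y : R} (hY : IsZero Y) : X ⊞ Y ≅ X := (isoBiprodZero hY).symm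

end Br

/-! ### Homology of special complexes, acyclicity, forward direction -/

namespace Br

variable {R : Type u} [SmallCategory R] [Abelian R] [EnoughProjectives R]

open ZeroObject Z2Cx CategoryTheory.ShortComplex

lemma _root_.CategoryTheory.ShortComplex.Exact.isZero_homology' {S : ShortComplex R}
    (h : S.Exact) : IsZero S.homology := S.exact_iff_isZero_homology.1 h

/-- Homology of a short complex with vanishing second map is the cokernel of the first. -/
def homologyIsoCokernelOfGZero (S : ShortComplex R) (hg : S.g = 0) :
    S.homology ≅ cokernel S.f :=
  (ShortComplex.HomologyData.ofHasCokernel S hg).left.homologyIso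

/-- The "d0-direction" two-term complex. -/
def Cg {P Q : R} (g : P ⟶ Q) : Z2Cx R := ⟨P, Q, g, 0, by simp, by simp⟩

/-- The acyclic complex supported on the identity in the `d0` direction. -/
def KQ (P : R) : Z2Cx R := ⟨P, P, 𝟙 P, 0, by simp, by simp⟩

lemma acyclic_KP (P : R) : Acyclic R (KP R P) :=
  ⟨(((SC0 (KP R P)).exact_iff_epi rfl).2 (by dsimp [KP]; infer_instance)).isZero_homology',
   (((SC1 (KP R P)).exact_iff_mono rfl).2 (by dsimp [KP]; infer_instance)).isZero_homology'⟩

lemma acyclic_KQ (P : R) : Acyclic R (KQ (R := R) P) :=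
  ⟨(((SC0 (KQ P)).exact_iff_mono rfl).2 (by dsimp [KQ]; infer_instance)).isZero_homology',
   (((SC1 (KQ P)).exact_iff_epi rfl).2 (by dsimp [KQ]; infer_instance)).isZero_homology'⟩

/-- `H0` of `Cf f` is the cokernel of `f`. -/
def H0Cf {P Q : R} (f : P ⟶ Q) : H0 R (Cf R f) ≅ cokernel f :=
  homologyIsoCokernelOfGZero (SC0 (Cf R f)) rfl

lemma isZero_H1Cf {P Q : R} (f : P ⟶ Q) [Mono f] : IsZero (H1 R (Cf R f)) :=
  (((SC1 (Cf R f)).exact_iff_mono rfl).2 (by dsimp [Cf]; infer_instance)).isZero_homology'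

/-- `H1` of `Cg g` is the cokernel of `g`. -/
def H1Cg {P Q : R} (g : P ⟶ Q) : H1 R (Cg g) ≅ cokernel g :=
  homologyIsoCokernelOfGZero (SC1 (Cg g)) rfl

lemma isZero_H0Cg {P Q : R} (g : P ⟶ Q) [Mono g] : IsZero (H0 R (Cg g)) :=
  (((SC0 (Cg g)).exact_iff_mono rfl).2 (by dsimp [Cg]; infer_instance)).isZero_homology'

lemma acyclic_dsum {M N : Z2Cx R} (hM : Acyclic R M) (hN : Acyclic R N) :
    Acyclic R (dsum R M N) :=
  ⟨(isZero_biprod hM.1 hN.1).of_iso (H0dsum M N),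
   (isZero_biprod hM.2 hN.2).of_iso (H1dsum M N)⟩

/-- `X ⊞ Y ≅ Y` when `X` is zero. -/
def biprodIsoOfIsZero' {X Y : R} (hX : IsZero X) : X ⊞ Y ≅ Y := (isoZeroBiprod hX).symm

/-- Forward direction: an isomorphism up to acyclic complexes induces an isomorphism
on homology. -/
lemma forward {M M' K K' : Z2Cx R} (hK : Acyclic R K) (hK' : Acyclic R K')
    (e : dsum R M K' ≅ dsum R K M') : Nonempty (Hcx R M ≅ Hcx R M') := by
  refine ⟨mkIso ?_ ?_ (by simp [Hcx]) (by simp [Hcx])⟩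
  · exact (biprodIsoOfIsZero hK'.1).symm ≪≫ (H0dsum M K').symm ≪≫ H0Iso e ≪≫
      H0dsum K M' ≪≫ biprodIsoOfIsZero' hK.1
  · exact (biprodIsoOfIsZero hK'.2).symm ≪≫ (H1dsum M K').symm ≪≫ H1Iso e ≪≫
      H1dsum K M' ≪≫ biprodIsoOfIsZero' hK.2

end Br

/-! ### Hereditary: subobjects of projectives are projective -/

namespace Br

open ZeroObject Z2Cx CategoryTheory.ShortComplex Projective

section Res

variable {R : Type u} [SmallCategory R] [Abelian R] [EnoughProjectives R]

lemma d_comp_self {Q P : R} (f : Q ⟶ P) : Projective.d f ≫ f = 0 :=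
  (fun (S : ShortComplex R) (_ : S.Exact) => S.zero) _ (CategoryTheory.exact_d_f f)

/-- The tower of syzygies over a morphism `f : Q ⟶ P` of projectives. -/
def tower {Q P : R} (f : Q ⟶ P) : ℕ → Σ (A : R) (B : R), (B ⟶ A)
  | 0 => ⟨P, Q, f⟩
  | n+1 => ⟨(tower f n).2.1, syzygies (tower f n).2.2, Projective.d (tower f n).2.2⟩

/-- The chain complex built from the tower. -/
def resComplex {Q P : R} (f : Q ⟶ P) : ChainComplex R ℕ :=
  ChainComplex.of (fun n => (tower f n).1) (fun n => (tower f n).2.2)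
    (fun n => by
      show Projective.d ((tower f n).2.2) ≫ (tower f n).2.2 = 0
      exact d_comp_self _)

lemma resComplex_d_1_0 {Q P : R} (f : Q ⟶ P) : (resComplex f).d 1 0 = f :=
  ChainComplex.of_d (fun n => (tower f n).1) (fun n => (tower f n).2.2) 0

lemma resComplex_d_2_1 {Q P : R} (f : Q ⟶ P) :
    (resComplex f).d 2 1 = Projective.d f :=
  ChainComplex.of_d (fun n => (tower f n).1) (fun n => (tower f n).2.2) 1

lemma resComplex_d_3_2 {Q P : R} (f : Q ⟶ P) :
    (resComplex f).d 3 2 = Projective.d (Projective.d f) :=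
  ChainComplex.of_d (fun n => (tower f n).1) (fun n => (tower f n).2.2) 2

lemma tower_proj {Q P : R} (f : Q ⟶ P) [Projective P] [Projective Q] :
    ∀ n, Projective (tower f n).1 ∧ Projective (tower f n).2.1
  | 0 => ⟨‹_›, ‹_›⟩
  | n+1 => ⟨(tower_proj f n).2, by dsimp [tower]; infer_instance⟩

lemma resComplex_exactAt_succ {Q P : R} (f : Q ⟶ P) (n : ℕ) :
    (resComplex f).ExactAt (n + 1) := by
  rw [HomologicalComplex.exactAt_iff' _ (n + 1 + 1) (n + 1) n (by simp) (by simp)]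
  refine (ShortComplex.exact_iff_of_iso (S₁ := ShortComplex.mk _ _ (d_comp_self ((tower f n).2.2)))
    (S₂ := (resComplex f).sc' (n + 1 + 1) (n + 1) n)
    (ShortComplex.isoMk (Iso.refl _) (Iso.refl _)
    (Iso.refl _) ?_ ?_)).1 (CategoryTheory.exact_d_f ((tower f n).2.2))
  · exact (Category.id_comp _).trans ((ChainComplex.of_d (fun n => (tower f n).1)
      (fun n => (tower f n).2.2) (n + 1)).trans (Category.comp_id _).symm)
  · exact (Category.id_comp _).trans ((ChainComplex.of_d (fun n => (tower f n).1)
      (fun n => (tower f n).2.2) n).trans (Category.comp_id _).symm)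

/-- The projective resolution of `cokernel f` associated to a morphism of projectives. -/
def resOf {Q P : R} (f : Q ⟶ P) [Projective P] [Projective Q] :
    ProjectiveResolution (cokernel f) where
  complex := resComplex f
  projective n := (tower_proj f n).1
  π := (ChainComplex.toSingle₀Equiv _ _).symm
    ⟨cokernel.π f, by rw [resComplex_d_1_0]; exact cokernel.condition f⟩
  quasiIso := ⟨fun n => by
    cases n with
    | zero =>
      rw [ChainComplex.quasiIsoAt₀_iff, ShortComplex.quasiIso_iff_of_zeros']
      · refine (ShortComplex.exact_and_epi_g_iff_of_iso ?_).2
          ⟨ShortComplex.exact_of_g_is_cokernel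
            (ShortComplex.mk f (cokernel.π f) (cokernel.condition f))
            (cokernelIsCokernel f), inferInstance⟩
        exact ShortComplex.isoMk (Iso.refl _) (Iso.refl _) (Iso.refl _)
          (by exact (Category.id_comp _).trans ((resComplex_d_1_0 f).symm.trans (Category.comp_id _).symm))
          (by exact (Category.id_comp _).trans ((ChainComplex.toSingle₀Equiv_symm_apply_f_zero (C := resComplex f) (cokernel.π f) _).symm.trans (Category.comp_id _).symm))
      all_goals rfl
    | succ n =>
      rw [quasiIsoAt_iff_exactAt']
      · exact resComplex_exactAt_succ f n
      · apply ChainComplex.exactAt_succ_single_obj⟩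

end Res

section Hered

variable {R : Type u} [SmallCategory R] [Abelian R] [Linear k R] [EnoughProjectives R]

variable {k}

/-- Key consequence of the hereditary hypothesis: a 2-cocycle for `Hom(-, W)` on the
resolution of `cokernel f` is a coboundary. -/
lemma ext2_vanish (hH : Hereditary k R) {Q P : R} (f : Q ⟶ P) [Projective P] [Projective Q]
    (W : R) (φ : syzygies f ⟶ W) (hφ : Projective.d (Projective.d f) ≫ φ = 0) :
    ∃ ψ : Q ⟶ W, Projective.d f ≫ ψ = φ := by
  have hsub : Subsingleton (((_root_.Ext k R 2).obj (op (cokernel f))).obj W) := hH _ _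
  have hz : IsZero ((((resOf f).complex.linearYonedaObj k W)).homology 2) := by
    refine IsZero.of_iso ?_ ((resOf f).isoExt 2 W).symm
    exact ModuleCat.isZero_of_subsingleton _
  have hex : (((resOf f).complex.linearYonedaObj k W)).ExactAt 2 :=
    (HomologicalComplex.exactAt_iff_isZero_homology _ 2).2 hz
  rw [HomologicalComplex.exactAt_iff' _ 1 2 3 (by simp) (by simp)] at hex
  rw [ShortComplex.moduleCat_exact_iff] at hex
  have h2 : ((resOf f).complex.linearYonedaObj k W).d 2 3 =
      ModuleCat.ofHom (Linear.leftComp k W ((resOf f).complex.d 3 2)) :=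
    ChainComplex.linearYonedaObj_d _ _ _ _ _
  have h1 : ((resOf f).complex.linearYonedaObj k W).d 1 2 =
      ModuleCat.ofHom (Linear.leftComp k W ((resOf f).complex.d 2 1)) :=
    ChainComplex.linearYonedaObj_d _ _ _ _ _
  obtain ⟨ψ, hψ⟩ := hex φ (by
    show (((resOf f).complex.linearYonedaObj k W).d 2 3) φ = 0
    rw [h2]
    show (resOf f).complex.d 3 2 ≫ φ = 0
    rw [show (resOf f).complex.d 3 2 = Projective.d (Projective.d f) from
      resComplex_d_3_2 f]; exact hφ)
  refine ⟨ψ, ?_⟩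
  have h3 : (((resOf f).complex.linearYonedaObj k W).d 1 2) ψ = φ := hψ
  rw [h1] at h3
  have h4 : (resOf f).complex.d 2 1 ≫ ψ = φ := h3
  rw [show (resOf f).complex.d 2 1 = Projective.d f from resComplex_d_2_1 f] at h4
  exact h4

/-- Hereditary categories: the source of a mono into a projective is projective. -/
lemma projective_of_mono_to_projective (hH : Hereditary k R) {K P : R} (i : K ⟶ P)
    [Mono i] [Projective P] : Projective K := by
  -- choose a projective cover of K and split it
  set E := Projective.over K with hE
  set b : E ⟶ K := Projective.π K with hb
  set Q₀ := Projective.over E with hQ₀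
  set ρ : Q₀ ⟶ E := Projective.π E with hρ
  set π₀ : Q₀ ⟶ K := ρ ≫ b with hπ₀
  set f : Q₀ ⟶ P := ρ ≫ b ≫ i with hf
  have hfeq : f = π₀ ≫ i := by rw [hf, hπ₀, Category.assoc]
  set W := kernel b with hW
  set a : W ⟶ E := kernel.ι b with ha
  -- the 2-cocycle
  have hd : (Projective.d f ≫ ρ) ≫ b = 0 := by
    rw [← cancel_mono i]
    simp only [Category.assoc, zero_comp]
    rw [← hf]
    exact d_comp_self f
  set φ : syzygies f ⟶ W := kernel.lift b (Projective.d f ≫ ρ) hd with hφdef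
  have hφa : φ ≫ a = Projective.d f ≫ ρ := kernel.lift_ι _ _ _
  have hφ : Projective.d (Projective.d f) ≫ φ = 0 := by
    rw [← cancel_mono a, Category.assoc, hφa, zero_comp, ← Category.assoc]
    rw [d_comp_self, zero_comp]
  obtain ⟨ψ, hψ⟩ := ext2_vanish hH f W φ hφ
  -- ρ - ψ ≫ a descends along π₀
  have hker : Projective.d f ≫ (ρ - ψ ≫ a) = 0 := by
    rw [Preadditive.comp_sub, ← Category.assoc, hψ, hφa, sub_self]
  -- exactness of (d f, π₀)
  have hexact : (ShortComplex.mk (Projective.d f) π₀ (by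
      rw [← cancel_mono i, Category.assoc, zero_comp, ← hfeq]; exact d_comp_self f)).Exact := by
    have h0 := CategoryTheory.exact_d_f f
    let τ : ShortComplex.mk (Projective.d f) π₀ (by
        rw [← cancel_mono i, Category.assoc, zero_comp, ← hfeq]; exact d_comp_self f) ⟶
        ShortComplex.mk (Projective.d f) f (d_comp_self f) :=
      { τ₁ := 𝟙 _
        τ₂ := 𝟙 _
        τ₃ := i
        comm₁₂ := by simp
        comm₂₃ := by simp [hfeq] }
    have : Epi τ.τ₁ := by dsimp [τ]; infer_instance
    have : IsIso τ.τ₂ := by dsimp [τ]; infer_instance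
    have : Mono τ.τ₃ := by dsimp [τ]; infer_instance
    rw [ShortComplex.exact_iff_of_epi_of_isIso_of_mono τ]
    exact h0
  have hepi : Epi π₀ := by rw [hπ₀]; exact epi_comp _ _
  obtain ⟨s, hs⟩ : ∃ s : K ⟶ E, π₀ ≫ s = ρ - ψ ≫ a := by
    refine ⟨hexact.desc (ρ - ψ ≫ a) hker, hexact.g_desc _ _⟩
  have hsb : s ≫ b = 𝟙 K := by
    rw [← cancel_epi π₀, ← Category.assoc, hs, Preadditive.sub_comp, Category.assoc,
      Category.assoc]
    rw [show a ≫ b = 0 from kernel.condition b]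
    simp [hπ₀]
  -- K is a retract of the projective E
  exact ⟨fun g e he => by
    obtain ⟨h, hh⟩ := Projective.factors (b ≫ g) e
    exact ⟨s ≫ h, by rw [Category.assoc, hh, ← Category.assoc, hsb, Category.id_comp]⟩⟩

end Hered

end Br

/-! ### Decomposition of a complex of projectives -/

namespace Br

open ZeroObject Z2Cx CategoryTheory.ShortComplex Projective

section Decomp

variable {R : Type u} [SmallCategory R] [Abelian R] [Linear k R] [EnoughProjectives R]
variable {k}

lemma mono_neg {X Y : R} (f : X ⟶ Y) [Mono f] : Mono (-f) :=
  ⟨fun {Z} g h e => by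
    rw [Preadditive.comp_neg, Preadditive.comp_neg, neg_inj, cancel_mono] at e
    exact e⟩

lemma decomp (hH : Hereditary k R) (M : Z2Cx R) (h0 : Projective M.X0)
    (h1 : Projective M.X1) :
    ∃ (A B C D : R) (f : A ⟶ B) (g : C ⟶ D),
      Projective A ∧ Projective B ∧ Projective C ∧ Projective D ∧
      Mono f ∧ Mono g ∧ Nonempty (M ≅ dsum R (Cf R f) (Cg g)) ∧
      Nonempty (H0 R M ≅ cokernel f) ∧ Nonempty (H1 R M ≅ cokernel g) := by
  -- kernels
  set Z0 := kernel M.d0 with hZ0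
  set k0 : Z0 ⟶ M.X0 := kernel.ι M.d0 with hk0
  set Z1 := kernel M.d1 with hZ1
  set k1 : Z1 ⟶ M.X1 := kernel.ι M.d1 with hk1
  -- coimages
  set C1 := cokernel k1 with hC1
  set p1 : M.X1 ⟶ C1 := cokernel.π k1 with hp1
  set j1 : C1 ⟶ M.X0 := cokernel.desc k1 M.d1 (kernel.condition M.d1) with hj1
  have hp1j1 : p1 ≫ j1 = M.d1 := cokernel.π_desc _ _ _
  set C0 := cokernel k0 with hC0
  set p0 : M.X0 ⟶ C0 := cokernel.π k0 with hp0
  set j0 : C0 ⟶ M.X1 := cokernel.desc k0 M.d0 (kernel.condition M.d0) with hj0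
  have hp0j0 : p0 ≫ j0 = M.d0 := cokernel.π_desc _ _ _
  -- j1, j0 are monos (coimage-image comparison)
  have hj1mono : Mono j1 := by
    have : j1 = Abelian.factorThruCoimage M.d1 := by
      rw [← cancel_epi p1, hp1j1]
      all_goals exact (Abelian.coimage.fac M.d1).symm
    rw [this]; infer_instance
  have hj0mono : Mono j0 := by
    have : j0 = Abelian.factorThruCoimage M.d0 := by
      rw [← cancel_epi p0, hp0j0]
      all_goals exact (Abelian.coimage.fac M.d0).symm
    rw [this]; infer_instance
  -- projectivity of the pieces
  have PZ0 : Projective Z0 := projective_of_mono_to_projective hH k0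
  have PZ1 : Projective Z1 := projective_of_mono_to_projective hH k1
  have PC1 : Projective C1 := @projective_of_mono_to_projective k _ _ R _ _ _ _ hH _ _ j1 hj1mono h0
  have PC0 : Projective C0 := @projective_of_mono_to_projective k _ _ R _ _ _ _ hH _ _ j0 hj0mono h1
  -- the monos into the kernels
  have hd1d0 : j1 ≫ M.d0 = 0 := by
    rw [← cancel_epi p1, ← Category.assoc, hp1j1, M.d10, comp_zero]
  have hd0d1 : j0 ≫ M.d1 = 0 := by
    rw [← cancel_epi p0, ← Category.assoc, hp0j0, M.d01, comp_zero]
  set m1 : C1 ⟶ Z0 := kernel.lift M.d0 j1 hd1d0 with hm1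
  have hm1k0 : m1 ≫ k0 = j1 := kernel.lift_ι _ _ _
  set m0 : C0 ⟶ Z1 := kernel.lift M.d1 j0 hd0d1 with hm0
  have hm0k1 : m0 ≫ k1 = j0 := kernel.lift_ι _ _ _
  have hm1mono : Mono m1 := by
    have := hj1mono
    rw [← hm1k0] at this
    exact mono_of_mono m1 k0
  have hm0mono : Mono m0 := by
    have := hj0mono
    rw [← hm0k1] at this
    exact mono_of_mono m0 k1
  -- splittings
  have := PC1
  set s1 : C1 ⟶ M.X1 := Projective.factorThru (𝟙 C1) p1 with hs1def
  have hs1 : s1 ≫ p1 = 𝟙 C1 := Projective.factorThru_comp _ _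
  have := PC0
  set s0 : C0 ⟶ M.X0 := Projective.factorThru (𝟙 C0) p0 with hs0def
  have hs0 : s0 ≫ p0 = 𝟙 C0 := Projective.factorThru_comp _ _
  have ht1 : (𝟙 M.X1 - p1 ≫ s1) ≫ p1 = 0 := by
    rw [Preadditive.sub_comp, Category.id_comp, Category.assoc, hs1, Category.comp_id, sub_self]
  set r1 : M.X1 ⟶ Z1 := Abelian.monoLift k1 (𝟙 M.X1 - p1 ≫ s1) ht1 with hr1def
  have hr1 : r1 ≫ k1 = 𝟙 M.X1 - p1 ≫ s1 := Abelian.monoLift_comp _ _ _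
  have ht0 : (𝟙 M.X0 - p0 ≫ s0) ≫ p0 = 0 := by
    rw [Preadditive.sub_comp, Category.id_comp, Category.assoc, hs0, Category.comp_id, sub_self]
  set r0 : M.X0 ⟶ Z0 := Abelian.monoLift k0 (𝟙 M.X0 - p0 ≫ s0) ht0 with hr0def
  have hr0 : r0 ≫ k0 = 𝟙 M.X0 - p0 ≫ s0 := Abelian.monoLift_comp _ _ _
  have hk1r1 : k1 ≫ r1 = 𝟙 Z1 := by
    rw [← cancel_mono k1, Category.assoc, hr1, Preadditive.comp_sub, Category.comp_id,
      ← Category.assoc, cokernel.condition, zero_comp, sub_zero, Category.id_comp]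
  have hk0r0 : k0 ≫ r0 = 𝟙 Z0 := by
    rw [← cancel_mono k0, Category.assoc, hr0, Preadditive.comp_sub, Category.comp_id,
      ← Category.assoc, cokernel.condition, zero_comp, sub_zero, Category.id_comp]
  have hs1r1 : s1 ≫ r1 = 0 := by
    rw [← cancel_mono k1, Category.assoc, hr1, Preadditive.comp_sub, Category.comp_id,
      ← Category.assoc, hs1, Category.id_comp, sub_self, zero_comp]
  have hs0r0 : s0 ≫ r0 = 0 := by
    rw [← cancel_mono k0, Category.assoc, hr0, Preadditive.comp_sub, Category.comp_id,
      ← Category.assoc, hs0, Category.id_comp, sub_self, zero_comp]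
  -- the component isomorphisms
  have hk1p1 : k1 ≫ p1 = 0 := cokernel.condition _
  have hk0p0 : k0 ≫ p0 = 0 := cokernel.condition _
  set φ1 : M.X1 ≅ C1 ⊞ Z1 := biprodIsoOf p1 r1 s1 k1 hs1 hk1r1 hs1r1 hk1p1
    (by rw [hr1]; abel) with hφ1
  set φ0 : M.X0 ≅ Z0 ⊞ C0 := biprodIsoOf r0 (-p0) k0 (-s0) hk0r0
    (by rw [Preadditive.neg_comp, Preadditive.comp_neg, neg_neg, hs0])
    (by rw [Preadditive.comp_neg, hk0p0, neg_zero])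
    (by rw [Preadditive.neg_comp, hs0r0, neg_zero])
    (by rw [Preadditive.comp_neg, Preadditive.neg_comp, neg_neg, hr0]; abel) with hφ0
  -- auxiliary facts
  have hd0p1 : M.d0 ≫ p1 = 0 := by
    rw [← kernel.lift_ι M.d1 M.d0 M.d01, Category.assoc, cokernel.condition, comp_zero]
  have hd1p0 : M.d1 ≫ p0 = 0 := by
    rw [← kernel.lift_ι M.d0 M.d1 M.d10, Category.assoc, cokernel.condition, comp_zero]
  have hd0r1 : M.d0 ≫ r1 = p0 ≫ m0 := by
    rw [← cancel_mono k1, Category.assoc, Category.assoc, hm0k1, hp0j0, hr1,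
      Preadditive.comp_sub, Category.comp_id, ← Category.assoc, hd0p1, zero_comp, sub_zero]
  have hd1r0 : M.d1 ≫ r0 = p1 ≫ m1 := by
    rw [← cancel_mono k0, Category.assoc, Category.assoc, hm1k0, hp1j1, hr0,
      Preadditive.comp_sub, Category.comp_id, ← Category.assoc, hd1p0, zero_comp, sub_zero]
  -- the isomorphism of complexes
  haveI hmono1 : Mono m1 := hm1mono
  haveI hmono0 : Mono (-m0) := mono_neg m0
  have hcomm0 : M.d0 ≫ φ1.hom = φ0.hom ≫ (dsum R (Cf R m1) (Cg (-m0))).d0 := by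
    show M.d0 ≫ biprod.lift p1 r1 =
      biprod.lift r0 (-p0) ≫ biprod.map (0 : Z0 ⟶ C1) (-m0)
    apply biprod.hom_ext
    · rw [Category.assoc, biprod.lift_fst, Category.assoc, biprod.map_fst,
        biprod.lift_fst_assoc, comp_zero, hd0p1]
    · rw [Category.assoc, biprod.lift_snd, Category.assoc, biprod.map_snd,
        biprod.lift_snd_assoc, hd0r1, Preadditive.neg_comp, Preadditive.comp_neg, neg_neg]
  have hcomm1 : M.d1 ≫ φ0.hom = φ1.hom ≫ (dsum R (Cf R m1) (Cg (-m0))).d1 := by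
    show M.d1 ≫ biprod.lift r0 (-p0) =
      biprod.lift p1 r1 ≫ biprod.map m1 (0 : Z1 ⟶ C0)
    apply biprod.hom_ext
    · rw [Category.assoc, biprod.lift_fst, Category.assoc, biprod.map_fst,
        biprod.lift_fst_assoc, hd1r0]
    · rw [Category.assoc, biprod.lift_snd, Category.assoc, biprod.map_snd,
        biprod.lift_snd_assoc, comp_zero, Preadditive.comp_neg, hd1p0, neg_zero]
  have δ : M ≅ dsum R (Cf R m1) (Cg (-m0)) := mkIso φ0 φ1 hcomm0 hcomm1
  exact ⟨C1, Z0, C0, Z1, m1, -m0, PC1, PZ0, PC0, PZ1, hm1mono, hmono0, ⟨δ⟩,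
    ⟨H0Iso δ ≪≫ H0dsum _ _ ≪≫ biprodIsoOfIsZero (isZero_H0Cg (-m0)) ≪≫ H0Cf m1⟩,
    ⟨H1Iso δ ≪≫ H1dsum _ _ ≪≫ biprodIsoOfIsZero' (isZero_H1Cf m1) ≪≫ H1Cg (-m0)⟩⟩

end Decomp

end Br

/-! ### Schanuel's lemma, compatible with the complex structure -/

namespace Br

open ZeroObject Z2Cx Projective

section Schanuel

variable {R : Type u} [SmallCategory R] [Abelian R] [EnoughProjectives R]

lemma biprod_map_zero_zero {X Y X' Y' : R} :
    biprod.map (0 : X ⟶ X') (0 : Y ⟶ Y') = 0 := by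
  ext <;> simp

lemma schanuel_core {P Q P' Q' : R} (f : P ⟶ Q) (f' : P' ⟶ Q') [Mono f] [Mono f']
    [Projective Q] [Projective Q'] (γ : cokernel f ≅ cokernel f') :
    ∃ (u : P ⊞ P' ≅ P' ⊞ P) (v : Q ⊞ P' ≅ Q' ⊞ P),
      biprod.map f (𝟙 P') ≫ v.hom = u.hom ≫ biprod.map f' (𝟙 P) := by
  set A := cokernel f with hA
  set c : Q ⟶ A := cokernel.π f with hc
  set c' : Q' ⟶ A := cokernel.π f' ≫ γ.inv with hc'
  haveI : Epi c' := by rw [hc']; exact epi_comp _ _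
  have hfc : f ≫ c = 0 := cokernel.condition f
  have hfc' : f' ≫ c' = 0 := by
    rw [hc', ← Category.assoc, cokernel.condition, zero_comp]
  set X := pullback c c' with hX
  set fst : X ⟶ Q := pullback.fst c c' with hfst
  set snd : X ⟶ Q' := pullback.snd c c' with hsnd
  have hcond : fst ≫ c = snd ≫ c' := pullback.condition
  set ι : P ⟶ X := pullback.lift f 0 (by rw [hfc, zero_comp]) with hι
  set ι' : P' ⟶ X := pullback.lift 0 f' (by rw [hfc', zero_comp]) with hι'
  have hιfst : ι ≫ fst = f := pullback.lift_fst _ _ _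
  have hιsnd : ι ≫ snd = 0 := pullback.lift_snd _ _ _
  have hι'fst : ι' ≫ fst = 0 := pullback.lift_fst _ _ _
  have hι'snd : ι' ≫ snd = f' := pullback.lift_snd _ _ _
  haveI : Mono ι := by
    have h := hιfst; rw [← h] at ‹Mono f›; exact mono_of_mono ι fst
  haveI : Mono ι' := by
    have h := hι'snd; rw [← h] at ‹Mono f'›; exact mono_of_mono ι' snd
  -- sections of the projections
  set σ : Q ⟶ X := Projective.factorThru (𝟙 Q) fst with hσdef
  have hσ : σ ≫ fst = 𝟙 Q := Projective.factorThru_comp _ _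
  set σ' : Q' ⟶ X := Projective.factorThru (𝟙 Q') snd with hσ'def
  have hσ' : σ' ≫ snd = 𝟙 Q' := Projective.factorThru_comp _ _
  -- kernel property of ι' with respect to fst
  have kprop : ∀ {T : R} (t : T ⟶ X), t ≫ fst = 0 → ∃ w : T ⟶ P', w ≫ ι' = t := by
    intro T t ht
    have h1 : (t ≫ snd) ≫ cokernel.π f' = 0 := by
      have h2 : t ≫ snd ≫ c' = 0 := by
        rw [← hcond, ← Category.assoc, ht, zero_comp]
      rw [hc'] at h2
      rw [← cancel_mono γ.inv, zero_comp]
      simp only [Category.assoc] at h2 ⊢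
      exact h2
    refine ⟨Abelian.monoLift f' (t ≫ snd) h1, ?_⟩
    apply pullback.hom_ext
    · rw [Category.assoc]
      show Abelian.monoLift f' (t ≫ snd) h1 ≫ ι' ≫ fst = t ≫ fst
      rw [hι'fst, comp_zero, ht]
    · rw [Category.assoc]
      show Abelian.monoLift f' (t ≫ snd) h1 ≫ ι' ≫ snd = t ≫ snd
      rw [hι'snd, Abelian.monoLift_comp]
  have kprop' : ∀ {T : R} (t : T ⟶ X), t ≫ snd = 0 → ∃ w : T ⟶ P, w ≫ ι = t := by
    intro T t ht
    have h1 : (t ≫ fst) ≫ cokernel.π f = 0 := by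
      rw [Category.assoc]
      show t ≫ fst ≫ c = 0
      rw [hcond, ← Category.assoc, ht, zero_comp]
    refine ⟨Abelian.monoLift f (t ≫ fst) h1, ?_⟩
    apply pullback.hom_ext
    · rw [Category.assoc]
      show Abelian.monoLift f (t ≫ fst) h1 ≫ ι ≫ fst = t ≫ fst
      rw [hιfst, Abelian.monoLift_comp]
    · rw [Category.assoc]
      show Abelian.monoLift f (t ≫ fst) h1 ≫ ι ≫ snd = t ≫ snd
      rw [hιsnd, comp_zero, ht]
  -- X ≅ Q ⊞ P'
  obtain ⟨w, hw⟩ := kprop (𝟙 X - fst ≫ σ) (by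
    rw [Preadditive.sub_comp, Category.id_comp, Category.assoc, hσ, Category.comp_id, sub_self])
  have hι'w : ι' ≫ w = 𝟙 P' := by
    rw [← cancel_mono ι', Category.assoc, hw, Preadditive.comp_sub, Category.comp_id,
      ← Category.assoc, hι'fst, zero_comp, sub_zero, Category.id_comp]
  have hσw : σ ≫ w = 0 := by
    rw [← cancel_mono ι', Category.assoc, hw, Preadditive.comp_sub, Category.comp_id,
      ← Category.assoc, hσ, Category.id_comp, sub_self, zero_comp]
  set αX : X ≅ Q ⊞ P' := biprodIsoOf fst w σ ι' hσ hι'w hσw hι'fst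
    (by rw [hw]; abel) with hαX
  -- X ≅ Q' ⊞ P
  obtain ⟨w', hw'⟩ := kprop' (𝟙 X - snd ≫ σ') (by
    rw [Preadditive.sub_comp, Category.id_comp, Category.assoc, hσ', Category.comp_id, sub_self])
  have hιw' : ι ≫ w' = 𝟙 P := by
    rw [← cancel_mono ι, Category.assoc, hw', Preadditive.comp_sub, Category.comp_id,
      ← Category.assoc, hιsnd, zero_comp, sub_zero, Category.id_comp]
  have hσ'w' : σ' ≫ w' = 0 := by
    rw [← cancel_mono ι, Category.assoc, hw', Preadditive.comp_sub, Category.comp_id,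
      ← Category.assoc, hσ', Category.id_comp, sub_self, zero_comp]
  set α'X : X ≅ Q' ⊞ P := biprodIsoOf snd w' σ' ι hσ' hιw' hσ'w' hιsnd
    (by rw [hw']; abel) with hα'X
  set v : Q ⊞ P' ≅ Q' ⊞ P := αX.symm ≪≫ α'X with hv
  -- the compatibility map
  have hvhom : v.hom = biprod.desc σ ι' ≫ biprod.lift snd w' := rfl
  have hvinv : v.inv = biprod.desc σ' ι ≫ biprod.lift fst w := rfl
  set ψ : P ⊞ P' ⟶ Q' ⊞ P := biprod.map f (𝟙 P') ≫ v.hom with hψdef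
  have e1 : ψ ≫ biprod.fst ≫ c' = 0 := by
    apply biprod.hom_ext'
    · rw [comp_zero, hψdef, hvhom]
      simp only [Category.assoc]
      rw [biprod.inl_map_assoc, biprod.inl_desc_assoc, biprod.lift_fst_assoc, ← hcond,
        reassoc_of% hσ, hfc]
    · rw [comp_zero, hψdef, hvhom]
      simp only [Category.assoc]
      rw [biprod.inr_map_assoc, biprod.inr_desc_assoc, biprod.lift_fst_assoc,
        reassoc_of% hι'snd, Category.id_comp, hfc']
  have hψfst : ψ ≫ biprod.fst ≫ cokernel.π f' = 0 := by
    rw [hc'] at e1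
    rw [← cancel_mono γ.inv, zero_comp]
    simp only [Category.assoc] at e1 ⊢
    exact e1
  set w₁ : P ⊞ P' ⟶ P' := Abelian.monoLift f' (ψ ≫ biprod.fst) (by
    rw [Category.assoc]; exact hψfst) with hw₁
  set uhom : P ⊞ P' ⟶ P' ⊞ P := biprod.lift w₁ (ψ ≫ biprod.snd) with huhom
  have hu : uhom ≫ biprod.map f' (𝟙 P) = ψ := by
    apply biprod.hom_ext
    · rw [Category.assoc, biprod.map_fst, ← Category.assoc, biprod.lift_fst,
        Abelian.monoLift_comp, Category.assoc]
    · rw [Category.assoc, biprod.map_snd, ← Category.assoc, biprod.lift_snd,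
        Category.comp_id, Category.assoc]
  -- inverse direction
  set ψ' : P' ⊞ P ⟶ Q ⊞ P' := biprod.map f' (𝟙 P) ≫ v.inv with hψ'def
  have hψ'fst : ψ' ≫ biprod.fst ≫ cokernel.π f = 0 := by
    have e1' : ψ' ≫ biprod.fst ≫ c = 0 := by
      apply biprod.hom_ext'
      · rw [comp_zero, hψ'def, hvinv]
        simp only [Category.assoc]
        rw [biprod.inl_map_assoc, biprod.inl_desc_assoc, biprod.lift_fst_assoc, hcond,
          reassoc_of% hσ', hfc']
      · rw [comp_zero, hψ'def, hvinv]
        simp only [Category.assoc]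
        rw [biprod.inr_map_assoc, biprod.inr_desc_assoc, biprod.lift_fst_assoc,
          reassoc_of% hιfst, Category.id_comp, hfc]
    rw [hc] at e1'
    exact e1'
  set w₂ : P' ⊞ P ⟶ P := Abelian.monoLift f (ψ' ≫ biprod.fst) (by
    rw [Category.assoc]; exact hψ'fst) with hw₂
  set uinv : P' ⊞ P ⟶ P ⊞ P' := biprod.lift w₂ (ψ' ≫ biprod.snd) with huinv
  have hu' : uinv ≫ biprod.map f (𝟙 P') = ψ' := by
    apply biprod.hom_ext
    · rw [Category.assoc, biprod.map_fst, ← Category.assoc, biprod.lift_fst,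
        Abelian.monoLift_comp, Category.assoc]
    · rw [Category.assoc, biprod.map_snd, ← Category.assoc, biprod.lift_snd,
        Category.comp_id, Category.assoc]
  haveI : Mono (biprod.map f (𝟙 P')) := by infer_instance
  haveI : Mono (biprod.map f' (𝟙 P)) := by infer_instance
  have huu : uhom ≫ uinv = 𝟙 _ := by
    rw [← cancel_mono (biprod.map f (𝟙 P')), Category.assoc, hu', hψ'def,
      ← Category.assoc, hu, hψdef, Category.assoc, Iso.hom_inv_id, Category.comp_id,
      Category.id_comp]
  have huu' : uinv ≫ uhom = 𝟙 _ := by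
    rw [← cancel_mono (biprod.map f' (𝟙 P)), Category.assoc, hu, hψdef,
      ← Category.assoc, hu', hψ'def, Category.assoc, Iso.inv_hom_id, Category.comp_id,
      Category.id_comp]
  exact ⟨⟨uhom, uinv, huu, huu'⟩, v, hu.symm⟩

/-- Schanuel for `d1`-direction complexes. -/
lemma schanuel_Cf {P Q P' Q' : R} (f : P ⟶ Q) (f' : P' ⟶ Q') [Mono f] [Mono f']
    [Projective Q] [Projective Q'] (γ : cokernel f ≅ cokernel f') :
    Nonempty (dsum R (Cf R f) (KP R P') ≅ dsum R (Cf R f') (KP R P)) := by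
  obtain ⟨u, v, huv⟩ := schanuel_core f f' γ
  refine ⟨mkIso v u ?_ ?_⟩
  · show biprod.map (0 : Q ⟶ P) (0 : P' ⟶ P') ≫ u.hom =
      v.hom ≫ biprod.map (0 : Q' ⟶ P') (0 : P ⟶ P)
    rw [biprod_map_zero_zero, biprod_map_zero_zero, zero_comp, comp_zero]
  · exact huv

/-- Schanuel for `d0`-direction complexes. -/
lemma schanuel_Cg {P Q P' Q' : R} (g : P ⟶ Q) (g' : P' ⟶ Q') [Mono g] [Mono g']
    [Projective Q] [Projective Q'] (γ : cokernel g ≅ cokernel g') :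
    Nonempty (dsum R (Cg g) (KQ P') ≅ dsum R (Cg g') (KQ P)) := by
  obtain ⟨u, v, huv⟩ := schanuel_core g g' γ
  refine ⟨mkIso u v ?_ ?_⟩
  · exact huv
  · show biprod.map (0 : Q ⟶ P) (0 : P' ⟶ P') ≫ u.hom =
      v.hom ≫ biprod.map (0 : Q' ⟶ P') (0 : P ⟶ P)
    rw [biprod_map_zero_zero, biprod_map_zero_zero, zero_comp, comp_zero]

end Schanuel

end Br

/-! ### Assembly combinators -/

namespace Br

open ZeroObject Z2Cx Projective

section Assemble

variable {R : Type u} [SmallCategory R] [Abelian R] [EnoughProjectives R]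

lemma biprod_map_comp {A B C A' B' C' : R} (a : A ⟶ B) (b : B ⟶ C) (a' : A' ⟶ B')
    (b' : B' ⟶ C') : biprod.map a a' ≫ biprod.map b b' = biprod.map (a ≫ b) (a' ≫ b') := by
  ext <;> simp

/-- `dsum` is functorial in isomorphisms. -/
def dsumMapIso {M M' N N' : Z2Cx R} (e : M ≅ M') (e' : N ≅ N') :
    dsum R M N ≅ dsum R M' N' :=
  mkIso (biprod.mapIso (isoX0 e) (isoX0 e')) (biprod.mapIso (isoX1 e) (isoX1 e'))
    (by
      show biprod.map M.d0 N.d0 ≫ biprod.map (isoX1 e).hom (isoX1 e').hom =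
        biprod.map (isoX0 e).hom (isoX0 e').hom ≫ biprod.map M'.d0 N'.d0
      rw [biprod_map_comp, biprod_map_comp]
      show biprod.map (M.d0 ≫ e.hom.f1) (N.d0 ≫ e'.hom.f1) =
        biprod.map (e.hom.f0 ≫ M'.d0) (e'.hom.f0 ≫ N'.d0)
      rw [e.hom.comm0, e'.hom.comm0])
    (by
      show biprod.map M.d1 N.d1 ≫ biprod.map (isoX0 e).hom (isoX0 e').hom =
        biprod.map (isoX1 e).hom (isoX1 e').hom ≫ biprod.map M'.d1 N'.d1
      rw [biprod_map_comp, biprod_map_comp]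
      show biprod.map (M.d1 ≫ e.hom.f0) (N.d1 ≫ e'.hom.f0) =
        biprod.map (e.hom.f1 ≫ M'.d1) (e'.hom.f1 ≫ N'.d1)
      rw [e.hom.comm1, e'.hom.comm1])

/-- Commutativity of `dsum`. -/
def dsumComm (M N : Z2Cx R) : dsum R M N ≅ dsum R N M :=
  mkIso (biprod.braiding _ _) (biprod.braiding _ _)
    (by
      show biprod.map M.d0 N.d0 ≫ (biprod.braiding M.X1 N.X1).hom =
        (biprod.braiding M.X0 N.X0).hom ≫ biprod.map N.d0 M.d0
      ext <;> simp [biprod.braiding])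
    (by
      show biprod.map M.d1 N.d1 ≫ (biprod.braiding M.X0 N.X0).hom =
        (biprod.braiding M.X1 N.X1).hom ≫ biprod.map N.d1 M.d1
      ext <;> simp [biprod.braiding])

/-- The middle-four exchange morphism on biproducts. -/
def perm4hom (A B C D : R) : (A ⊞ B) ⊞ (C ⊞ D) ⟶ (A ⊞ C) ⊞ (B ⊞ D) :=
  biprod.lift
    (biprod.lift (biprod.fst ≫ biprod.fst) (biprod.snd ≫ biprod.fst))
    (biprod.lift (biprod.fst ≫ biprod.snd) (biprod.snd ≫ biprod.snd))

lemma perm4_invol (A B C D : R) : perm4hom A B C D ≫ perm4hom A C B D = 𝟙 _ := by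
  dsimp [perm4hom]; ext <;> simp

lemma perm4_natural {A B C D A' B' C' D' : R} (a : A ⟶ A') (b : B ⟶ B') (c : C ⟶ C')
    (d : D ⟶ D') :
    biprod.map (biprod.map a b) (biprod.map c d) ≫ perm4hom A' B' C' D' =
      perm4hom A B C D ≫ biprod.map (biprod.map a c) (biprod.map b d) := by
  dsimp [perm4hom]; ext <;> simp

/-- Middle-four exchange for `dsum`. -/
def dsumPerm (M N K L : Z2Cx R) :
    dsum R (dsum R M N) (dsum R K L) ≅ dsum R (dsum R M K) (dsum R N L) :=
  mkIso
    ⟨perm4hom _ _ _ _, perm4hom _ _ _ _, perm4_invol _ _ _ _, perm4_invol _ _ _ _⟩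
    ⟨perm4hom _ _ _ _, perm4hom _ _ _ _, perm4_invol _ _ _ _, perm4_invol _ _ _ _⟩
    (perm4_natural M.d0 N.d0 K.d0 L.d0)
    (perm4_natural M.d1 N.d1 K.d1 L.d1)

end Assemble

end Br

/-! ### Backward direction and main theorem -/

namespace Br

open ZeroObject Z2Cx Projective

section Backward

variable {R : Type u} [SmallCategory R] [Abelian R] [Linear k R] [EnoughProjectives R]
variable {k}

lemma backward (hH : Hereditary k R) (M M' : Z2Cx R) (h0 : Projective M.X0)
    (h1 : Projective M.X1) (h0' : Projective M'.X0) (h1' : Projective M'.X1)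
    (e : Hcx R M ≅ Hcx R M') :
    ∃ K K' : Z2Cx R, Projective K.X0 ∧ Projective K.X1 ∧ Projective K'.X0 ∧
      Projective K'.X1 ∧ Acyclic R K ∧ Acyclic R K' ∧
      Nonempty (dsum R M K' ≅ dsum R K M') := by
  obtain ⟨A, B, C, D, f, g, PA, PB, PC, PD, mf, mg, ⟨δ⟩, ⟨h0iso⟩, ⟨h1iso⟩⟩ :=
    decomp hH M h0 h1
  obtain ⟨A', B', C', D', f', g', PA', PB', PC', PD', mf', mg', ⟨δ'⟩, ⟨h0iso'⟩, ⟨h1iso'⟩⟩ :=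
    decomp hH M' h0' h1'
  haveI := PA; haveI := PB; haveI := PC; haveI := PD
  haveI := PA'; haveI := PB'; haveI := PC'; haveI := PD'
  haveI := mf; haveI := mg; haveI := mf'; haveI := mg'
  have γf : cokernel f ≅ cokernel f' := h0iso.symm ≪≫ isoX0 e ≪≫ h0iso'
  have γg : cokernel g ≅ cokernel g' := h1iso.symm ≪≫ isoX1 e ≪≫ h1iso'
  obtain ⟨W1⟩ := schanuel_Cf f f' γf
  obtain ⟨W0⟩ := schanuel_Cg g g' γg
  refine ⟨dsum R (KP R A) (KQ C), dsum R (KP R A') (KQ C'),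
    (inferInstance : Projective (A ⊞ C)), (inferInstance : Projective (A ⊞ C)),
    (inferInstance : Projective (A' ⊞ C')), (inferInstance : Projective (A' ⊞ C')),
    acyclic_dsum (acyclic_KP A) (acyclic_KQ C),
    acyclic_dsum (acyclic_KP A') (acyclic_KQ C'), ⟨?_⟩⟩
  calc dsum R M (dsum R (KP R A') (KQ C'))
      ≅ dsum R (dsum R (Cf R f) (Cg g)) (dsum R (KP R A') (KQ C')) :=
        dsumMapIso δ (Iso.refl _)
    _ ≅ dsum R (dsum R (Cf R f) (KP R A')) (dsum R (Cg g) (KQ C')) :=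
        dsumPerm _ _ _ _
    _ ≅ dsum R (dsum R (Cf R f') (KP R A)) (dsum R (Cg g') (KQ C)) :=
        dsumMapIso W1 W0
    _ ≅ dsum R (dsum R (Cf R f') (Cg g')) (dsum R (KP R A) (KQ C)) :=
        dsumPerm _ _ _ _
    _ ≅ dsum R (dsum R (KP R A) (KQ C)) (dsum R (Cf R f') (Cg g')) :=
        dsumComm _ _
    _ ≅ dsum R (dsum R (KP R A) (KQ C)) M' := dsumMapIso (Iso.refl _) δ'.symm

end Backward

end Br


theorem stmt7 (hH : Hereditary k R) (hc : CondC R) (hd : CondD R) (he : CondE R)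
    (M M' : Z2Cx R) (h0 : Projective M.X0) (h1 : Projective M.X1)
    (h0' : Projective M'.X0) (h1' : Projective M'.X1) :
    (∃ K K' : Z2Cx R, Projective K.X0 ∧ Projective K.X1 ∧ Projective K'.X0 ∧
        Projective K'.X1 ∧ Acyclic R K ∧ Acyclic R K' ∧
        Nonempty (dsum R M K' ≅ dsum R K M')) ↔
      Nonempty (Hcx R M ≅ Hcx R M') := by
  constructor
  · rintro ⟨K, K', _, _, _, _, hK, hK', ⟨e⟩⟩
    exact Br.forward hK hK' e
  · rintro ⟨e⟩
    exact Br.backward hH M M' h0 h1 h0' h1' e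


end
end
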